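/- arXiv:quant-ph/0205064 — 4 statements merged into one kernel-verified Lean document; each statement's English description precedes it below -/
import Mathlib

section
/- For positive definite matrices A and B, Tr A(log A - log B) ≥ Tr(A - B), with equality if and only if A = B. -/
open Matrix
open scoped ComplexOrder

noncomputable def mlog {n : Type*} [Fintype n] [DecidableEq n] (A : Matrix n n ℂ) : Matrix n n ℂ :=
  cfc Real.log A

noncomputable def mexp {n : Type*} [Fintype n] [DecidableEq n] (A : Matrix n n ℂ) : Matrix n n ℂ :=
  cfc Real.exp A

/-- von Neumann entropy `S(ρ) = -Tr ρ log ρ`. -/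
noncomputable def vnEnt {n : Type*} [Fintype n] [DecidableEq n] (ρ : Matrix n n ℂ) : ℝ :=
  -(Matrix.trace (ρ * mlog ρ)).re

/-- quantum relative entropy `H(ρ,γ) = Tr ρ (log ρ - log γ)`. -/
noncomputable def relEnt {n : Type*} [Fintype n] [DecidableEq n] (ρ γ : Matrix n n ℂ) : ℝ :=
  (Matrix.trace (ρ * (mlog ρ - mlog γ))).re

private lemma klein_pt {a b : ℝ} (ha : 0 < a) (hb : 0 < b) :
    a - b ≤ a * (Real.log a - Real.log b) := by
  have h := Real.log_le_sub_one_of_pos (div_pos hb ha)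
  rw [Real.log_div hb.ne' ha.ne'] at h
  have h2 := mul_le_mul_of_nonneg_left h ha.le
  have key : a * (b / a - 1) = b - a := by field_simp
  nlinarith

private lemma klein_pt_lt {a b : ℝ} (ha : 0 < a) (hb : 0 < b) (hne : a ≠ b) :
    a - b < a * (Real.log a - Real.log b) := by
  have h := Real.log_lt_sub_one_of_pos (div_pos hb ha)
    (fun h1 => hne ((div_eq_one_iff_eq ha.ne').mp h1).symm)
  rw [Real.log_div hb.ne' ha.ne'] at h
  have h2 := mul_lt_mul_of_pos_left h ha
  have key : a * (b / a - 1) = b - a := by field_simp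
  nlinarith

private lemma trace_conj_mul {n : Type*} [Fintype n] [DecidableEq n]
    (U V : Matrix.unitaryGroup n ℂ) (d e : n → ℝ) :
    (Matrix.trace ((U : Matrix n n ℂ) * Matrix.diagonal (RCLike.ofReal ∘ d) *
        star (U : Matrix n n ℂ) *
      ((V : Matrix n n ℂ) * Matrix.diagonal (RCLike.ofReal ∘ e) * star (V : Matrix n n ℂ)))).re
    = ∑ i, ∑ j, d i * e j * ‖(star (U : Matrix n n ℂ) * (V : Matrix n n ℂ)) i j‖ ^ 2 := by
  set P : Matrix n n ℂ := star (U : Matrix n n ℂ) * (V : Matrix n n ℂ) with hP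
  have key : ((U : Matrix n n ℂ) * Matrix.diagonal (RCLike.ofReal ∘ d) * star (U : Matrix n n ℂ) *
      ((V : Matrix n n ℂ) * Matrix.diagonal (RCLike.ofReal ∘ e) * star (V : Matrix n n ℂ)))
      = (U : Matrix n n ℂ) * (Matrix.diagonal (RCLike.ofReal ∘ d) * P *
          Matrix.diagonal (RCLike.ofReal ∘ e) * (star (V : Matrix n n ℂ))) := by
    simp only [hP, Matrix.mul_assoc]
  rw [key, Matrix.trace_mul_comm]
  have key2 : Matrix.diagonal (RCLike.ofReal ∘ d) * P *
          Matrix.diagonal (RCLike.ofReal ∘ e) * (star (V : Matrix n n ℂ)) * (U : Matrix n n ℂ)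
      = Matrix.diagonal (RCLike.ofReal ∘ d) * P *
          Matrix.diagonal (RCLike.ofReal ∘ e) * star P := by
    simp only [hP, StarMul.star_mul, star_star, Matrix.mul_assoc]
  rw [key2]
  have entry : ∀ i, (Matrix.diagonal (RCLike.ofReal ∘ d) * P *
          Matrix.diagonal (RCLike.ofReal ∘ e) * star P : Matrix n n ℂ) i i
      = ∑ j, ((d i * e j * ‖P i j‖ ^ 2 : ℝ) : ℂ) := by
    intro i
    rw [star_eq_conjTranspose, Matrix.mul_apply]
    refine Finset.sum_congr rfl fun j _ => ?_
    rw [Matrix.mul_diagonal, Matrix.diagonal_mul, Matrix.conjTranspose_apply]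
    have : (RCLike.ofReal ∘ d) i * P i j * (RCLike.ofReal ∘ e) j * star (P i j)
        = ((d i : ℂ) * (e j : ℂ)) * (P i j * star (P i j)) := by
      have hd : ((RCLike.ofReal (d i)) : ℂ) = (d i : ℂ) := rfl
      have he : ((RCLike.ofReal (e j)) : ℂ) = (e j : ℂ) := rfl
      simp only [Function.comp_apply, hd, he]
      ring
    rw [this, Complex.star_def, Complex.mul_conj']
    push_cast
    ring
  rw [Matrix.trace]
  unfold Matrix.diag
  rw [Complex.re_sum]
  refine Finset.sum_congr rfl fun i _ => ?_
  rw [entry i, ← Complex.ofReal_sum, Complex.ofReal_re]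


private lemma sq_row_sum {n : Type*} [Fintype n] [DecidableEq n]
    {P : Matrix n n ℂ} (h : P * star P = 1) (i : n) : ∑ j, ‖P i j‖ ^ 2 = 1 := by
  have h1 : (P * star P) i i = 1 := by rw [h, Matrix.one_apply_eq]
  rw [Matrix.mul_apply] at h1
  have key : ∀ j, P i j * star P j i = ((‖P i j‖ ^ 2 : ℝ) : ℂ) := by
    intro j
    rw [star_eq_conjTranspose, Matrix.conjTranspose_apply, Complex.star_def, Complex.mul_conj']
    push_cast; ring
  rw [Finset.sum_congr rfl (fun j _ => key j), ← Complex.ofReal_sum] at h1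
  exact_mod_cast h1

private lemma sq_col_sum {n : Type*} [Fintype n] [DecidableEq n]
    {P : Matrix n n ℂ} (h : star P * P = 1) (j : n) : ∑ i, ‖P i j‖ ^ 2 = 1 := by
  have h1 : (star P * P) j j = 1 := by rw [h, Matrix.one_apply_eq]
  rw [Matrix.mul_apply] at h1
  have key : ∀ i, star P j i * P i j = ((‖P i j‖ ^ 2 : ℝ) : ℂ) := by
    intro i
    rw [star_eq_conjTranspose, Matrix.conjTranspose_apply, Complex.star_def, mul_comm,
      Complex.mul_conj']
    push_cast; ring
  rw [Finset.sum_congr rfl (fun i _ => key i), ← Complex.ofReal_sum] at h1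
  exact_mod_cast h1


/-- Klein's inequality with equality condition. -/
theorem klein_inequality {n : Type*} [Fintype n] [DecidableEq n]
    (A B : Matrix n n ℂ) (hA : A.PosDef) (hB : B.PosDef) :
    (Matrix.trace (A - B)).re ≤ (Matrix.trace (A * (mlog A - mlog B))).re ∧
      ((Matrix.trace (A * (mlog A - mlog B))).re = (Matrix.trace (A - B)).re ↔ A = B) := by
  have hHA := hA.1
  have hHB := hB.1
  set U := hHA.eigenvectorUnitary with hUdef
  set V := hHB.eigenvectorUnitary with hVdef
  set a := hHA.eigenvalues with hadef
  set b := hHB.eigenvalues with hbdef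
  set P : Matrix n n ℂ := star (U : Matrix n n ℂ) * (V : Matrix n n ℂ) with hPdef
  have hUU : star (U : Matrix n n ℂ) * (U : Matrix n n ℂ) = 1 := mem_unitaryGroup_iff'.mp U.2
  have hVV : star (V : Matrix n n ℂ) * (V : Matrix n n ℂ) = 1 := mem_unitaryGroup_iff'.mp V.2
  have hUU' : (U : Matrix n n ℂ) * star (U : Matrix n n ℂ) = 1 := mem_unitaryGroup_iff.mp U.2
  have hVV' : (V : Matrix n n ℂ) * star (V : Matrix n n ℂ) = 1 := mem_unitaryGroup_iff.mp V.2
  have hPP : P * star P = 1 := by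
    rw [hPdef, StarMul.star_mul, star_star]
    have e : star (U : Matrix n n ℂ) * (V : Matrix n n ℂ) *
        (star (V : Matrix n n ℂ) * (U : Matrix n n ℂ))
        = star (U : Matrix n n ℂ) * (((V : Matrix n n ℂ) * star (V : Matrix n n ℂ)) *
          (U : Matrix n n ℂ)) := by
      simp only [Matrix.mul_assoc]
    rw [e, hVV', Matrix.one_mul, hUU]
  have hPP' : star P * P = 1 := by
    rw [hPdef, StarMul.star_mul, star_star]
    have e : star (V : Matrix n n ℂ) * (U : Matrix n n ℂ) *
        (star (U : Matrix n n ℂ) * (V : Matrix n n ℂ))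
        = star (V : Matrix n n ℂ) * (((U : Matrix n n ℂ) * star (U : Matrix n n ℂ)) *
          (V : Matrix n n ℂ)) := by
      simp only [Matrix.mul_assoc]
    rw [e, hUU', Matrix.one_mul, hVV]
  have hAspec : A = (U : Matrix n n ℂ) * diagonal (RCLike.ofReal ∘ a) * star (U : Matrix n n ℂ) :=
    hHA.spectral_theorem
  have hlogA : mlog A = (U : Matrix n n ℂ) * diagonal (RCLike.ofReal ∘ (Real.log ∘ a)) *
      star (U : Matrix n n ℂ) := by
    rw [mlog, hHA.cfc_eq]; rfl
  have hlogB : mlog B = (V : Matrix n n ℂ) * diagonal (RCLike.ofReal ∘ (Real.log ∘ b)) *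
      star (V : Matrix n n ℂ) := by
    rw [mlog, hHB.cfc_eq]; rfl
  have t3 : (Matrix.trace A).re = ∑ i, a i := by
    conv_lhs => rw [hAspec]
    rw [Matrix.trace_mul_comm, ← Matrix.mul_assoc, hUU, Matrix.one_mul, Matrix.trace_diagonal]
    have e : (RCLike.ofReal ∘ a : n → ℂ) = fun i => ((a i : ℝ) : ℂ) := rfl
    rw [e, ← Complex.ofReal_sum, Complex.ofReal_re]
  set p : n → n → ℝ := fun i j => ‖P i j‖ ^ 2 with hpdef
  have hp0 : ∀ i j, 0 ≤ p i j := fun i j => sq_nonneg _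
  have hrow : ∀ i, ∑ j, p i j = 1 := fun i => sq_row_sum hPP i
  have hcol : ∀ j, ∑ i, p i j = 1 := fun j => sq_col_sum hPP' j
  have hapos : ∀ i, 0 < a i := fun i => hA.eigenvalues_pos i
  have hbpos : ∀ j, 0 < b j := fun j => hB.eigenvalues_pos j
  have hBspec : B = (V : Matrix n n ℂ) * diagonal (RCLike.ofReal ∘ b) * star (V : Matrix n n ℂ) :=
    hHB.spectral_theorem
  have t4 : (Matrix.trace B).re = ∑ j, b j := by
    conv_lhs => rw [hBspec]
    rw [Matrix.trace_mul_comm, ← Matrix.mul_assoc, hVV, Matrix.one_mul, Matrix.trace_diagonal]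
    have e : (RCLike.ofReal ∘ b : n → ℂ) = fun i => ((b i : ℝ) : ℂ) := rfl
    rw [e, ← Complex.ofReal_sum, Complex.ofReal_re]
  have t1 : (Matrix.trace (A * mlog A)).re = ∑ i, a i * Real.log (a i) := by
    conv_lhs => rw [hlogA, hAspec]
    rw [trace_conj_mul U U a (Real.log ∘ a), hUU]
    refine Finset.sum_congr rfl fun i _ => ?_
    simp [Matrix.one_apply, apply_ite, Finset.sum_ite_eq]
  have t2 : (Matrix.trace (A * mlog B)).re = ∑ i, ∑ j, a i * Real.log (b j) * p i j := by
    conv_lhs => rw [hlogB, hAspec]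
    exact trace_conj_mul U V a (Real.log ∘ b)
  have hG : (Matrix.trace (A * (mlog A - mlog B))).re
      = (∑ i, a i * Real.log (a i)) - ∑ i, ∑ j, a i * Real.log (b j) * p i j := by
    rw [mul_sub, Matrix.trace_sub, Complex.sub_re, t1, t2]
  have hT : (Matrix.trace (A - B)).re = (∑ i, a i) - ∑ j, b j := by
    rw [Matrix.trace_sub, Complex.sub_re, t3, t4]
  have key : (Matrix.trace (A * (mlog A - mlog B))).re - (Matrix.trace (A - B)).re
      = ∑ i, ∑ j, p i j * (a i * (Real.log (a i) - Real.log (b j)) - (a i - b j)) := by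
    rw [hG, hT]
    have e1 : ∑ i, a i * Real.log (a i) = ∑ i, ∑ j, p i j * (a i * Real.log (a i)) := by
      refine Finset.sum_congr rfl fun i _ => ?_
      rw [← Finset.sum_mul, hrow i, one_mul]
    have e2 : ∑ i, a i = ∑ i, ∑ j, p i j * a i := by
      refine Finset.sum_congr rfl fun i _ => ?_
      rw [← Finset.sum_mul, hrow i, one_mul]
    have e3 : ∑ j, b j = ∑ i, ∑ j, p i j * b j := by
      rw [Finset.sum_comm]
      refine Finset.sum_congr rfl fun j _ => ?_
      rw [← Finset.sum_mul, hcol j, one_mul]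
    have expand : ∀ i j, p i j * (a i * (Real.log (a i) - Real.log (b j)) - (a i - b j))
        = p i j * (a i * Real.log (a i)) - a i * Real.log (b j) * p i j
          - p i j * a i + p i j * b j := by
      intro i j; ring
    simp only [expand, Finset.sum_add_distrib, Finset.sum_sub_distrib]
    rw [← e1, ← e2, ← e3]
    ring
  have hF0 : ∀ i j, 0 ≤ p i j * (a i * (Real.log (a i) - Real.log (b j)) - (a i - b j)) :=
    fun i j => by
      have h1 := klein_pt (hapos i) (hbpos j)
      exact mul_nonneg (hp0 i j) (by linarith)
  have hsum : 0 ≤ ∑ i, ∑ j, p i j * (a i * (Real.log (a i) - Real.log (b j)) - (a i - b j)) :=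
    Finset.sum_nonneg fun i _ => Finset.sum_nonneg fun j _ => hF0 i j
  have hineq : (Matrix.trace (A - B)).re ≤ (Matrix.trace (A * (mlog A - mlog B))).re := by
    linarith [key, hsum]
  refine ⟨hineq, ?_, fun h => by rw [h]; simp⟩
  intro heq
  have h0 : ∑ i, ∑ j, p i j * (a i * (Real.log (a i) - Real.log (b j)) - (a i - b j)) = 0 := by
    linarith [key, heq]
  have hterm : ∀ i j, p i j * (a i * (Real.log (a i) - Real.log (b j)) - (a i - b j)) = 0 := by
    intro i j
    have hi := (Finset.sum_eq_zero_iff_of_nonneg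
      (fun i _ => Finset.sum_nonneg fun j _ => hF0 i j)).mp h0 i (Finset.mem_univ i)
    exact (Finset.sum_eq_zero_iff_of_nonneg (fun j _ => hF0 i j)).mp hi j (Finset.mem_univ j)
  have hab : ∀ i j, P i j ≠ 0 → a i = b j := by
    intro i j hne
    by_contra hab
    have hlt := klein_pt_lt (hapos i) (hbpos j) hab
    have hppos : 0 < p i j := pow_pos (norm_pos_iff.mpr hne) 2
    have : 0 < p i j * (a i * (Real.log (a i) - Real.log (b j)) - (a i - b j)) :=
      mul_pos hppos (by linarith)
    linarith [hterm i j]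
  have hcomm : P * diagonal (RCLike.ofReal ∘ b) = diagonal (RCLike.ofReal ∘ a) * P := by
    ext i j
    rw [Matrix.mul_diagonal, Matrix.diagonal_mul]
    by_cases h : P i j = 0
    · simp [h]
    · have := hab i j h
      simp only [Function.comp_apply, this]
      ring
  have hUV : (U : Matrix n n ℂ) * P = (V : Matrix n n ℂ) := by
    rw [hPdef, ← Matrix.mul_assoc, hUU', Matrix.one_mul]
  have hBA : B = (U : Matrix n n ℂ) * diagonal (RCLike.ofReal ∘ a) * star (U : Matrix n n ℂ) := by
    rw [hBspec, ← hUV, StarMul.star_mul]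
    have e : (U : Matrix n n ℂ) * P * diagonal (RCLike.ofReal ∘ b) *
        (star P * star (U : Matrix n n ℂ))
        = (U : Matrix n n ℂ) * ((P * diagonal (RCLike.ofReal ∘ b)) *
          star P) * star (U : Matrix n n ℂ) := by
      simp only [Matrix.mul_assoc]
    rw [e, hcomm, Matrix.mul_assoc (diagonal _) P (star P), hPP, Matrix.mul_one]
  rw [hAspec, hBA]
end

section
/- For Hermitian matrices A and B, the quantity Tr (e^{A/2^k} e^{B/2^k})^{2^k} is monotone nonincreasing in the natural number k. -/
open Matrix
open scoped ComplexOrder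

section aux
variable {n : Type*} [Fintype n] [DecidableEq n]

lemma re_le_nrm (z : ℂ) : z.re ≤ ‖z‖ := by
  exact Complex.re_le_norm _

lemma tr_cyc (A B : Matrix n n ℂ) (m : ℕ) :
    Matrix.trace ((A * B) ^ m) = Matrix.trace ((B * A) ^ m) := by
  cases m with
  | zero => simp
  | succ l =>
    have h : (A * B) ^ (l + 1) = A * (B * A) ^ l * B := by
      induction l with
      | zero => simp
      | succ j ih =>
        rw [pow_succ, ih, pow_succ]
        noncomm_ring
    rw [h, Matrix.trace_mul_comm, pow_succ']
    congr 1
    noncomm_ring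

lemma psd_tr_nonneg {M : Matrix n n ℂ} (hM : M.PosSemidef) : 0 ≤ (Matrix.trace M).re := by
  have h : ∀ i, 0 ≤ (M i i).re := by
    intro i
    have := hM.re_dotProduct_nonneg (Pi.single i 1)
    simpa [dotProduct, Matrix.mulVec, Pi.single_apply, Finset.sum_ite_eq] using this
  simp only [Matrix.trace, Matrix.diag, Complex.re_sum]
  exact Finset.sum_nonneg fun i _ => h i

lemma tr_inner (W Z : Matrix n n ℂ) :
    Matrix.trace (Wᴴ * Z) = inner (𝕜 := ℂ)
      ((WithLp.equiv 2 ((n × n) → ℂ)).symm fun p => W p.1 p.2)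
      ((WithLp.equiv 2 ((n × n) → ℂ)).symm fun p => Z p.1 p.2) := by
  rw [PiLp.inner_apply]
  simp only [WithLp.equiv_symm_apply, PiLp.toLp_apply, RCLike.inner_apply, Matrix.trace, Matrix.diag,
    Matrix.mul_apply, Matrix.conjTranspose_apply]
  rw [← Finset.sum_product', Finset.univ_product_univ]
  exact Fintype.sum_equiv (Equiv.prodComm n n) _ _ fun x => mul_comm _ _

lemma cs (X Y : Matrix n n ℂ) :
    ‖Matrix.trace (Xᴴ * Y)‖ ^ 2 ≤ (Matrix.trace (Xᴴ * X)).re * (Matrix.trace (Yᴴ * Y)).re := by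
  classical
  set u : EuclideanSpace ℂ (n × n) := (WithLp.equiv 2 ((n × n) → ℂ)).symm fun p => X p.1 p.2 with hu
  set v : EuclideanSpace ℂ (n × n) := (WithLp.equiv 2 ((n × n) → ℂ)).symm fun p => Y p.1 p.2 with hv
  have h1 : Matrix.trace (Xᴴ * Y) = inner (𝕜 := ℂ) u v := tr_inner X Y
  have h2 : (Matrix.trace (Xᴴ * X)).re = ‖u‖ ^ 2 := by
    rw [tr_inner X X]
    rw [show inner (𝕜 := ℂ) u u = ((‖u‖ : ℂ) ^ 2) from inner_self_eq_norm_sq_to_K u]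
    norm_cast
  have h3 : (Matrix.trace (Yᴴ * Y)).re = ‖v‖ ^ 2 := by
    rw [tr_inner Y Y]
    rw [show inner (𝕜 := ℂ) v v = ((‖v‖ : ℂ) ^ 2) from inner_self_eq_norm_sq_to_K v]
    norm_cast
  rw [h1, h2, h3]
  calc ‖inner (𝕜 := ℂ) u v‖ ^ 2 ≤ (‖u‖ * ‖v‖) ^ 2 := by
        have := norm_inner_le_norm (𝕜 := ℂ) u v
        nlinarith [norm_nonneg (inner (𝕜 := ℂ) u v)]
    _ = ‖u‖ ^ 2 * ‖v‖ ^ 2 := by ring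

/-- Joint induction: Cauchy–Schwarz ladder. -/
lemma EF (k : ℕ) :
    (∀ X : Matrix n n ℂ, ‖Matrix.trace (X ^ 2 ^ (k + 1))‖ ≤
        (Matrix.trace ((Xᴴ * X) ^ 2 ^ k)).re) ∧
    (∀ Y Z : Matrix n n ℂ, Y.IsHermitian → Z.IsHermitian →
        ‖Matrix.trace ((Y * Z) ^ 2 ^ k)‖ ^ 2 ≤
          (Matrix.trace (Y ^ 2 ^ (k + 1))).re * (Matrix.trace (Z ^ 2 ^ (k + 1))).re) := by
  induction k with
  | zero =>
    constructor
    · intro X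
      show ‖Matrix.trace (X ^ 2)‖ ≤ (Matrix.trace ((Xᴴ * X) ^ 1)).re
      rw [pow_one, pow_two]
      have h := cs Xᴴ X
      rw [conjTranspose_conjTranspose, Matrix.trace_mul_comm X Xᴴ] at h
      have hnn : 0 ≤ (Matrix.trace (Xᴴ * X)).re :=
        psd_tr_nonneg (posSemidef_conjTranspose_mul_self X)
      nlinarith [norm_nonneg (Matrix.trace (X * X))]
    · intro Y Z hY hZ
      show ‖Matrix.trace ((Y * Z) ^ 1)‖ ^ 2 ≤
        (Matrix.trace (Y ^ 2)).re * (Matrix.trace (Z ^ 2)).re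
      have h := cs Y Z
      rw [hY.eq, hZ.eq, show Y * Y = Y ^ 2 from (pow_two Y).symm,
        show Z * Z = Z ^ 2 from (pow_two Z).symm] at h
      rw [pow_one]
      exact h
  | succ k ih =>
    obtain ⟨E, F⟩ := ih
    constructor
    · -- E (k+1)
      intro X
      set Ym := Xᴴ * X with hYm
      set Zm := X * Xᴴ with hZm
      set c := Matrix.trace ((Ym * Zm) ^ 2 ^ k) with hc
      have e1 : X ^ 2 ^ (k + 1 + 1) = (X ^ 2) ^ 2 ^ (k + 1) := by
        rw [← pow_mul]; congr 1; ring
      have h2 := E (X ^ 2)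
      have e23 : Matrix.trace (((X ^ 2)ᴴ * X ^ 2) ^ 2 ^ k) = c := by
        have e2 : (X ^ 2)ᴴ * X ^ 2 = Xᴴ * ((Xᴴ * X) * X) := by
          simp [pow_two, Matrix.conjTranspose_mul, Matrix.mul_assoc]
        rw [e2, tr_cyc Xᴴ ((Xᴴ * X) * X), hc]
        congr 2
        simp [hYm, hZm, Matrix.mul_assoc]
      rw [e23] at h2
      have h4 := F Ym Zm (posSemidef_conjTranspose_mul_self X).1
        (posSemidef_self_mul_conjTranspose X).1
      have e4 : Matrix.trace (Zm ^ 2 ^ (k + 1)) = Matrix.trace (Ym ^ 2 ^ (k + 1)) :=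
        tr_cyc X Xᴴ _
      rw [e4, ← hc] at h4
      have hnn : 0 ≤ (Matrix.trace (Ym ^ 2 ^ (k + 1))).re :=
        psd_tr_nonneg ((posSemidef_conjTranspose_mul_self X).pow _)
      have h5 : c.re ≤ ‖c‖ := re_le_nrm c
      rw [e1]
      nlinarith [norm_nonneg c, norm_nonneg (Matrix.trace ((X ^ 2) ^ 2 ^ (k + 1)))]
    · -- F (k+1)
      intro Y Z hY hZ
      set c := Matrix.trace ((Y ^ 2 * Z ^ 2) ^ 2 ^ k) with hc
      have h1 := E (Y * Z)
      have e12 : Matrix.trace (((Y * Z)ᴴ * (Y * Z)) ^ 2 ^ k) = c := by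
        have e1 : (Y * Z)ᴴ * (Y * Z) = Z * (Y * (Y * Z)) := by
          rw [Matrix.conjTranspose_mul, hY.eq, hZ.eq, Matrix.mul_assoc]
        rw [e1, tr_cyc Z (Y * (Y * Z)), hc]
        congr 2
        simp [pow_two, Matrix.mul_assoc]
      rw [e12] at h1
      have h2 := F (Y ^ 2) (Z ^ 2) (hY.pow 2) (hZ.pow 2)
      have e3 : (Y ^ 2) ^ 2 ^ (k + 1) = Y ^ 2 ^ (k + 1 + 1) := by
        rw [← pow_mul]; congr 1; ring
      have e4 : (Z ^ 2) ^ 2 ^ (k + 1) = Z ^ 2 ^ (k + 1 + 1) := by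
        rw [← pow_mul]; congr 1; ring
      rw [e3, e4, ← hc] at h2
      have h3 : c.re ≤ ‖c‖ := re_le_nrm c
      nlinarith [norm_nonneg (Matrix.trace ((Y * Z) ^ 2 ^ (k + 1)))]

end aux

lemma mexp_sq {n : Type*} [Fintype n] [DecidableEq n] {A : Matrix n n ℂ}
    (hA : IsSelfAdjoint A) (s : ℝ) :
    mexp (s • A) * mexp (s • A) = mexp ((2 * s) • A) := by
  have hsA : IsSelfAdjoint (s • A) := IsSelfAdjoint.smul (star_trivial s) hA
  unfold mexp
  rw [← cfc_mul Real.exp Real.exp (s • A)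
    (Real.continuous_exp.continuousOn) (Real.continuous_exp.continuousOn)]
  have hf : (fun x : ℝ => Real.exp x * Real.exp x) = (fun x : ℝ => Real.exp ((2 : ℝ) • x)) := by
    funext x
    rw [← Real.exp_add, smul_eq_mul]
    ring_nf
  rw [hf, cfc_comp_smul (2 : ℝ) Real.exp (s • A)
    (Real.continuous_exp.continuousOn) hsA, smul_smul]

lemma mexp_herm {n : Type*} [Fintype n] [DecidableEq n] (A : Matrix n n ℂ) :
    (mexp A).IsHermitian := cfc_predicate Real.exp A

/-- Tr (e^{A/2^k} e^{B/2^k})^{2^k} is monotone nonincreasing in k. -/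
theorem trace_exp_halving_antitone {n : Type*} [Fintype n] [DecidableEq n]
    (A B : Matrix n n ℂ) (hA : A.IsHermitian) (hB : B.IsHermitian) :
    Antitone fun k : ℕ =>
      (Matrix.trace ((mexp ((1 / 2 ^ k : ℝ) • A) * mexp ((1 / 2 ^ k : ℝ) • B)) ^ (2 ^ k))).re := by
  apply antitone_nat_of_succ_le
  intro k
  set s : ℝ := 1 / 2 ^ (k + 1) with hs
  set P := mexp (s • A) with hP
  set Q := mexp (s • B) with hQ
  have hPh : P.IsHermitian := mexp_herm _
  have hQh : Q.IsHermitian := mexp_herm _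
  have h2s : (2 : ℝ) * s = 1 / 2 ^ k := by
    rw [hs, pow_succ]
    field_simp
  have hPP : P * P = mexp ((1 / 2 ^ k : ℝ) • A) := by
    rw [hP, mexp_sq hA s, h2s]
  have hQQ : Q * Q = mexp ((1 / 2 ^ k : ℝ) • B) := by
    rw [hQ, mexp_sq hB s, h2s]
  have h1 : (Matrix.trace ((P * Q) ^ 2 ^ (k + 1))).re ≤
      ‖Matrix.trace ((P * Q) ^ 2 ^ (k + 1))‖ := re_le_nrm _
  have h2 := (EF k).1 (P * Q)
  have e12 : Matrix.trace (((P * Q)ᴴ * (P * Q)) ^ 2 ^ k) =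
      Matrix.trace ((mexp ((1 / 2 ^ k : ℝ) • A) * mexp ((1 / 2 ^ k : ℝ) • B)) ^ 2 ^ k) := by
    have e1 : (P * Q)ᴴ * (P * Q) = Q * (P * (P * Q)) := by
      rw [Matrix.conjTranspose_mul, hPh.eq, hQh.eq, Matrix.mul_assoc]
    rw [e1, tr_cyc Q (P * (P * Q)), ← hPP, ← hQQ]
    congr 2
    simp [Matrix.mul_assoc]
  rw [e12] at h2
  linarith
end

section
/- For a density matrix ρ₁₂ on H₁ ⊗ H₂, the triangle (Araki–Lieb) inequality holds: |S(ρ₁) − S(ρ₂)| ≤ S(ρ₁₂). -/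
open Matrix
open scoped ComplexOrder

/-- partial trace over the first factor. -/
noncomputable def ptraceL {m n : Type*} [Fintype m] (ρ : Matrix (m × n) (m × n) ℂ) : Matrix n n ℂ :=
  Matrix.of fun j j' => ∑ i, ρ (i, j) (i, j')

/-- partial trace over the second factor. -/
noncomputable def ptraceR {m n : Type*} [Fintype n] (ρ : Matrix (m × n) (m × n) ℂ) : Matrix m m ℂ :=
  Matrix.of fun i i' => ∑ j, ρ (i, j) (i', j)


open Polynomial

namespace AL

section Poly


lemma eval_charpoly {p : Type*} [Fintype p] [DecidableEq p] (M : Matrix p p ℂ) (x : ℂ) :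
    M.charpoly.eval x = (x • (1 : Matrix p p ℂ) - M).det := by
  rw [Matrix.charpoly, ← Polynomial.coe_evalRingHom, RingHom.map_det]
  congr 1
  ext i j
  by_cases h : i = j
  · subst h
    simp [Matrix.charmatrix_apply_eq, Matrix.one_apply]
  · simp [Matrix.charmatrix_apply_ne _ _ _ h, Matrix.one_apply, h]

lemma charpoly_hermitian {n : Type*} [Fintype n] [DecidableEq n] {A : Matrix n n ℂ}
    (hA : A.IsHermitian) :
    A.charpoly = ∏ i, (X - C ((hA.eigenvalues i : ℂ))) := by
  apply Polynomial.funext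
  intro x
  rw [eval_charpoly]
  set U : Matrix n n ℂ := (hA.eigenvectorUnitary : Matrix n n ℂ) with hUdef
  have hU1 : U * star U = 1 := Matrix.mem_unitaryGroup_iff.mp (hA.eigenvectorUnitary).2
  have hU2 : star U * U = 1 := Matrix.mem_unitaryGroup_iff'.mp (hA.eigenvectorUnitary).2
  have key : x • (1 : Matrix n n ℂ) - A
      = U * (x • (1 : Matrix n n ℂ) - diagonal (RCLike.ofReal ∘ hA.eigenvalues)) * star U := by
    rw [Matrix.mul_sub, Matrix.sub_mul]
    congr 1
    · rw [Matrix.mul_smul, Matrix.smul_mul, Matrix.mul_one, hU1]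
    · exact hA.spectral_theorem
  rw [key, Matrix.det_mul, Matrix.det_mul, mul_comm, ← mul_assoc, ← Matrix.det_mul, hU2, Matrix.det_one, one_mul]
  have : x • (1 : Matrix n n ℂ) - diagonal (RCLike.ofReal ∘ hA.eigenvalues)
      = diagonal (fun i => x - (hA.eigenvalues i : ℂ)) := by
    rw [← Matrix.diagonal_one, ← Matrix.diagonal_smul, Matrix.diagonal_sub]
    congr 1
    funext i
    simp
  rw [this, Matrix.det_diagonal]
  simp [Polynomial.eval_prod]

lemma roots_charpoly_hermitian {n : Type*} [Fintype n] [DecidableEq n] {A : Matrix n n ℂ}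
    (hA : A.IsHermitian) :
    A.charpoly.roots = Finset.univ.val.map (fun i => (hA.eigenvalues i : ℂ)) := by
  rw [charpoly_hermitian hA]
  rw [show (∏ i, (X - C ((hA.eigenvalues i : ℂ))))
      = (Multiset.map (fun a => X - C a) (Finset.univ.val.map (fun i => (hA.eigenvalues i : ℂ)))).prod by
    rw [Multiset.map_map]; rfl]
  exact Polynomial.roots_multiset_prod_X_sub_C _

lemma sum_f_eigen_eq {n₁ n₂ : Type*} [Fintype n₁] [DecidableEq n₁] [Fintype n₂] [DecidableEq n₂]
    {A : Matrix n₁ n₁ ℂ} {B : Matrix n₂ n₂ ℂ} (hA : A.IsHermitian) (hB : B.IsHermitian)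
    (h : A.charpoly * X ^ (Fintype.card n₂) = B.charpoly * X ^ (Fintype.card n₁))
    (f : ℝ → ℝ) (hf : f 0 = 0) :
    ∑ i, f (hA.eigenvalues i) = ∑ j, f (hB.eigenvalues j) := by
  have hr : A.charpoly.roots + Multiset.replicate (Fintype.card n₂) (0 : ℂ)
      = B.charpoly.roots + Multiset.replicate (Fintype.card n₁) (0 : ℂ) := by
    have h2 := congrArg Polynomial.roots h
    rwa [Polynomial.roots_mul (mul_ne_zero A.charpoly_monic.ne_zero (pow_ne_zero _ X_ne_zero)),
      Polynomial.roots_mul (mul_ne_zero B.charpoly_monic.ne_zero (pow_ne_zero _ X_ne_zero)),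
      Polynomial.roots_pow, Polynomial.roots_pow, Polynomial.roots_X,
      Multiset.nsmul_singleton, Multiset.nsmul_singleton] at h2
  have key : ((A.charpoly.roots).map (fun z : ℂ => f z.re)).sum
      = ((B.charpoly.roots).map (fun z : ℂ => f z.re)).sum := by
    have := congrArg (fun s : Multiset ℂ => (s.map (fun z : ℂ => f z.re)).sum) hr
    simpa [Multiset.map_replicate, hf] using this
  rw [roots_charpoly_hermitian hA, roots_charpoly_hermitian hB] at key
  simp only [Multiset.map_map, Function.comp_def, Complex.ofReal_re] at key
  exact key

lemma charpoly_transpose {p : Type*} [Fintype p] [DecidableEq p] (M : Matrix p p ℂ) :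
    Mᵀ.charpoly = M.charpoly := by
  apply Polynomial.funext
  intro x
  rw [eval_charpoly, eval_charpoly, ← Matrix.det_transpose (x • (1 : Matrix p p ℂ) - M)]
  congr 1
  rw [Matrix.transpose_sub, Matrix.transpose_smul, Matrix.transpose_one]

lemma charpoly_mul_comm_pow {a b : Type*} [Fintype a] [DecidableEq a] [Fintype b] [DecidableEq b]
    (M : Matrix a b ℂ) (N : Matrix b a ℂ) :
    (M * N).charpoly * X ^ Fintype.card b = (N * M).charpoly * X ^ Fintype.card a := by
  have heval : ∀ x : ℂ, x ≠ 0 →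
      ((M * N).charpoly * X ^ Fintype.card b).eval x
        = ((N * M).charpoly * X ^ Fintype.card a).eval x := by
    intro x hx
    have e1 : x • (1 : Matrix a a ℂ) - M * N = x • ((1 : Matrix a a ℂ) + M * ((-x⁻¹) • N)) := by
      rw [Matrix.mul_smul, smul_add, smul_smul]
      rw [mul_neg, mul_inv_cancel₀ hx]
      simp [sub_eq_add_neg]
    have e2 : x • (1 : Matrix b b ℂ) - N * M = x • ((1 : Matrix b b ℂ) + ((-x⁻¹) • N) * M) := by
      rw [Matrix.smul_mul, smul_add, smul_smul]
      rw [mul_neg, mul_inv_cancel₀ hx]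
      simp [sub_eq_add_neg]
    rw [Polynomial.eval_mul, Polynomial.eval_mul, Polynomial.eval_pow, Polynomial.eval_pow,
      Polynomial.eval_X, eval_charpoly, eval_charpoly, e1, e2, Matrix.det_smul, Matrix.det_smul,
      Matrix.det_one_add_mul_comm]
    ring
  have hsub : ((M * N).charpoly * X ^ Fintype.card b) - ((N * M).charpoly * X ^ Fintype.card a) = 0 := by
    apply Polynomial.eq_zero_of_infinite_isRoot
    apply Set.Infinite.mono (s := {x : ℂ | x ≠ 0})
    · intro x hx
      simp only [Set.mem_setOf_eq, Polynomial.IsRoot, Polynomial.eval_sub]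
      rw [heval x hx]; ring
    · have h0 : {x : ℂ | x ≠ 0} = ({0} : Set ℂ)ᶜ := by ext z; simp
      rw [h0]
      exact (Set.finite_singleton 0).infinite_compl
  linear_combination hsub

end Poly

section Herm


variable {n : Type*} [Fintype n] [DecidableEq n]

local notation "conj'" => starRingEnd ℂ

lemma conj_U_lemmas {A : Matrix n n ℂ} (hA : A.IsHermitian) :
    ((hA.eigenvectorUnitary : Matrix n n ℂ) * star (hA.eigenvectorUnitary : Matrix n n ℂ) = 1)
    ∧ (star (hA.eigenvectorUnitary : Matrix n n ℂ) * (hA.eigenvectorUnitary : Matrix n n ℂ) = 1) :=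
  ⟨Matrix.mem_unitaryGroup_iff.mp (hA.eigenvectorUnitary).2,
   Matrix.mem_unitaryGroup_iff'.mp (hA.eigenvectorUnitary).2⟩

/-- completeness rows -/
lemma comp_of {P K : Type*} [Fintype P] [Fintype K] [DecidableEq P] (V : Matrix P K ℂ)
    (h : V * Vᴴ = 1) (p p' : P) :
    ∑ k, V p k * conj' (V p' k) = if p = p' then 1 else 0 := by
  have := congrFun (congrFun h p) p'
  simpa [Matrix.mul_apply, Matrix.conjTranspose_apply, Matrix.one_apply] using this

/-- orthonormality of columns -/
lemma orth_of {P K : Type*} [Fintype P] [Fintype K] [DecidableEq K] (V : Matrix P K ℂ)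
    (h : Vᴴ * V = 1) (k k' : K) :
    ∑ p, conj' (V p k) * V p k' = if k = k' then 1 else 0 := by
  have := congrFun (congrFun h k) k'
  simpa [Matrix.mul_apply, Matrix.conjTranspose_apply, Matrix.one_apply] using this

lemma trace_mul_cfc {A : Matrix n n ℂ} (hA : A.IsHermitian) (g : ℝ → ℝ) :
    Matrix.trace (A * cfc g A) = ((∑ i, hA.eigenvalues i * g (hA.eigenvalues i) : ℝ) : ℂ) := by
  rw [hA.cfc_eq, Matrix.IsHermitian.cfc, Unitary.conjStarAlgAut_apply]
  set U : Matrix n n ℂ := (hA.eigenvectorUnitary : Matrix n n ℂ) with hUdef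
  have hU2 : star U * U = 1 := Matrix.mem_unitaryGroup_iff'.mp (hA.eigenvectorUnitary).2
  set D1 : Matrix n n ℂ := diagonal (RCLike.ofReal ∘ hA.eigenvalues) with hD1def
  set D2 : Matrix n n ℂ := diagonal (RCLike.ofReal ∘ g ∘ hA.eigenvalues) with hD2def
  have hAeq : A = U * D1 * star U := hA.spectral_theorem
  rw [congrArg (fun M => Matrix.trace (M * (U * D2 * star U))) hAeq]
  have e : (U * D1 * star U) * (U * D2 * star U) = U * (D1 * D2) * star U := by
    calc (U * D1 * star U) * (U * D2 * star U) = U * D1 * (star U * U) * D2 * star U := by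
          simp only [Matrix.mul_assoc]
      _ = U * (D1 * D2) * star U := by rw [hU2, Matrix.mul_one]; simp only [Matrix.mul_assoc]
  rw [e, Matrix.trace_mul_comm, ← Matrix.mul_assoc, hU2, Matrix.one_mul]
  rw [show D1 * D2 = diagonal (fun i => ((hA.eigenvalues i * g (hA.eigenvalues i) : ℝ) : ℂ)) by
    rw [Matrix.diagonal_mul_diagonal]; congr 1; funext i; push_cast; rfl]
  rw [Matrix.trace_diagonal]
  push_cast
  rfl

lemma vnEnt_eq {A : Matrix n n ℂ} (hA : A.IsHermitian) :
    vnEnt A = ∑ i, -(hA.eigenvalues i * Real.log (hA.eigenvalues i)) := by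
  unfold vnEnt mlog
  rw [trace_mul_cfc hA Real.log]
  simp

lemma trace_eq_sum_eigen {A : Matrix n n ℂ} (hA : A.IsHermitian) :
    Matrix.trace A = ((∑ i, hA.eigenvalues i : ℝ) : ℂ) := by
  set U : Matrix n n ℂ := (hA.eigenvectorUnitary : Matrix n n ℂ) with hUdef
  have hU2 : star U * U = 1 := Matrix.mem_unitaryGroup_iff'.mp (hA.eigenvectorUnitary).2
  set D1 : Matrix n n ℂ := diagonal (RCLike.ofReal ∘ hA.eigenvalues) with hD1def
  have hAeq : A = U * D1 * star U := hA.spectral_theorem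
  rw [congrArg Matrix.trace hAeq, Matrix.trace_mul_comm, ← Matrix.mul_assoc, hU2, Matrix.one_mul, Matrix.trace_diagonal]
  push_cast
  rfl

/-- spectral decomposition entrywise -/
lemma entry_spectral {A : Matrix n n ℂ} (hA : A.IsHermitian) (p p' : n) :
    A p p' = ∑ k, ((hA.eigenvalues k : ℝ) : ℂ) *
      ((hA.eigenvectorUnitary : Matrix n n ℂ) p k * conj' ((hA.eigenvectorUnitary : Matrix n n ℂ) p' k)) := by
  set U : Matrix n n ℂ := (hA.eigenvectorUnitary : Matrix n n ℂ) with hUdef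
  set D1 : Matrix n n ℂ := diagonal (RCLike.ofReal ∘ hA.eigenvalues) with hD1def
  have hAeq : A = U * D1 * star U := hA.spectral_theorem
  rw [congrArg (fun M : Matrix n n ℂ => M p p') hAeq, Matrix.mul_apply]
  refine Finset.sum_congr rfl fun k _ => ?_
  rw [hD1def, Matrix.mul_diagonal]
  simp only [Matrix.star_apply, RCLike.star_def, Function.comp_apply,
    show (RCLike.ofReal : ℝ → ℂ) = Complex.ofReal from rfl]
  ring

lemma sum_inner_conj {P K : Type*} [Fintype P] [Fintype K] [DecidableEq P] (M : Matrix P K ℂ)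
    (hM : ∀ p p', ∑ k, M p k * conj' (M p' k) = if p = p' then 1 else 0)
    (w w' : P → ℂ) :
    ∑ k, (∑ p, conj' (M p k) * w p) * conj' (∑ p', conj' (M p' k) * w' p')
      = ∑ p, w p * conj' (w' p) := by
  have step1 : ∀ k, (∑ p, conj' (M p k) * w p) * conj' (∑ p', conj' (M p' k) * w' p')
      = ∑ p, ∑ p', (w p * conj' (w' p')) * (M p' k * conj' (M p k)) := by
    intro k
    rw [_root_.map_sum, Finset.sum_mul_sum]
    refine Finset.sum_congr rfl fun p _ => Finset.sum_congr rfl fun p' _ => ?_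
    simp only [_root_.map_mul, Complex.conj_conj]
    ring
  calc ∑ k, (∑ p, conj' (M p k) * w p) * conj' (∑ p', conj' (M p' k) * w' p')
      = ∑ k, ∑ p, ∑ p', (w p * conj' (w' p')) * (M p' k * conj' (M p k)) := by
        exact Finset.sum_congr rfl fun k _ => step1 k
    _ = ∑ p, ∑ p', (w p * conj' (w' p')) * ∑ k, M p' k * conj' (M p k) := by
        rw [Finset.sum_comm]
        refine Finset.sum_congr rfl fun p _ => ?_
        rw [Finset.sum_comm]
        refine Finset.sum_congr rfl fun p' _ => ?_
        rw [← Finset.mul_sum]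
    _ = ∑ p, w p * conj' (w' p) := by
        refine Finset.sum_congr rfl fun p _ => ?_
        simp only [hM]
        rw [Finset.sum_eq_single p]
        · simp
        · intro b _ hb
          simp [hb]
        · intro h; exact absurd (Finset.mem_univ p) h


end Herm

section Core


lemma sa_core {K I J : Type*} [Fintype K] [Fintype I] [Fintype J]
    (lam : K → ℝ) (al : I → ℝ) (be : J → ℝ) (q : K → I → J → ℝ)
    (hlam : ∀ k, 0 ≤ lam k) (hq : ∀ k i j, 0 ≤ q k i j)
    (hsum1 : ∀ k, ∑ i, ∑ j, q k i j = 1)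
    (hsum2 : ∀ i j, ∑ k, q k i j = 1)
    (hlamsum : ∑ k, lam k = 1)
    (hal : ∀ i, ∑ j, ∑ k, lam k * q k i j = al i)
    (hbe : ∀ j, ∑ i, ∑ k, lam k * q k i j = be j)
    (halsum : ∑ i, al i = 1) (hbesum : ∑ j, be j = 1) :
    (∑ k, -(lam k * Real.log (lam k)))
      ≤ (∑ i, -(al i * Real.log (al i))) + (∑ j, -(be j * Real.log (be j))) := by
  have hal0 : ∀ i, 0 ≤ al i := fun i => (hal i) ▸ Finset.sum_nonneg
    (fun j _ => Finset.sum_nonneg fun k _ => mul_nonneg (hlam k) (hq k i j))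
  have hbe0 : ∀ j, 0 ≤ be j := fun j => (hbe j) ▸ Finset.sum_nonneg
    (fun i _ => Finset.sum_nonneg fun k _ => mul_nonneg (hlam k) (hq k i j))
  have point : ∀ k i j, lam k * q k i j - al i * be j * q k i j
      ≤ lam k * q k i j * (Real.log (lam k) - Real.log (al i) - Real.log (be j)) := by
    intro k i j
    rcases eq_or_lt_of_le (hq k i j) with hq0 | hqpos
    · rw [← hq0]; simp
    rcases eq_or_lt_of_le (hlam k) with hl0 | hlpos
    · rw [← hl0]
      have h0 : (0:ℝ) ≤ al i * be j * q k i j :=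
        mul_nonneg (mul_nonneg (hal0 i) (hbe0 j)) (hq k i j)
      simp only [zero_mul, zero_sub, neg_le, neg_zero]
      linarith
    · have hLq : 0 < lam k * q k i j := mul_pos hlpos hqpos
      have hA : 0 < al i := by
        have h1 : lam k * q k i j ≤ ∑ k', lam k' * q k' i j :=
          Finset.single_le_sum (f := fun k' => lam k' * q k' i j)
            (fun k' _ => mul_nonneg (hlam k') (hq k' i j)) (Finset.mem_univ k)
        have h2 : ∑ k', lam k' * q k' i j ≤ ∑ j', ∑ k', lam k' * q k' i j' :=
          Finset.single_le_sum (f := fun j' => ∑ k', lam k' * q k' i j')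
            (fun j' _ => Finset.sum_nonneg fun k' _ => mul_nonneg (hlam k') (hq k' i j'))
            (Finset.mem_univ j)
        calc (0:ℝ) < lam k * q k i j := hLq
          _ ≤ ∑ j', ∑ k', lam k' * q k' i j' := le_trans h1 h2
          _ = al i := hal i
      have hB : 0 < be j := by
        have h1 : lam k * q k i j ≤ ∑ k', lam k' * q k' i j :=
          Finset.single_le_sum (f := fun k' => lam k' * q k' i j)
            (fun k' _ => mul_nonneg (hlam k') (hq k' i j)) (Finset.mem_univ k)
        have h2 : ∑ k', lam k' * q k' i j ≤ ∑ i', ∑ k', lam k' * q k' i' j :=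
          Finset.single_le_sum (f := fun i' => ∑ k', lam k' * q k' i' j)
            (fun i' _ => Finset.sum_nonneg fun k' _ => mul_nonneg (hlam k') (hq k' i' j))
            (Finset.mem_univ i)
        calc (0:ℝ) < lam k * q k i j := hLq
          _ ≤ ∑ i', ∑ k', lam k' * q k' i' j := le_trans h1 h2
          _ = be j := hbe j
      have hlog : Real.log (al i * be j / lam k) ≤ al i * be j / lam k - 1 :=
        Real.log_le_sub_one_of_pos (by positivity)
      have hexp : Real.log (al i * be j / lam k)
          = Real.log (al i) + Real.log (be j) - Real.log (lam k) := by
        rw [Real.log_div (by positivity) (ne_of_gt hlpos),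
          Real.log_mul (ne_of_gt hA) (ne_of_gt hB)]
      have key : lam k * q k i j * (Real.log (al i) + Real.log (be j) - Real.log (lam k))
          ≤ al i * be j * q k i j - lam k * q k i j := by
        calc lam k * q k i j * (Real.log (al i) + Real.log (be j) - Real.log (lam k))
            ≤ lam k * q k i j * (al i * be j / lam k - 1) := by
              apply mul_le_mul_of_nonneg_left _ (le_of_lt hLq)
              rw [← hexp]; exact hlog
          _ = al i * be j * q k i j - lam k * q k i j := by
              field_simp
      have hre : lam k * q k i j * (Real.log (lam k) - Real.log (al i) - Real.log (be j))
          = -(lam k * q k i j * (Real.log (al i) + Real.log (be j) - Real.log (lam k))) := by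
        ring
      linarith [key, hre]
  have main : ∑ k, ∑ i, ∑ j, (lam k * q k i j - al i * be j * q k i j)
      ≤ ∑ k, ∑ i, ∑ j, lam k * q k i j
          * (Real.log (lam k) - Real.log (al i) - Real.log (be j)) :=
    Finset.sum_le_sum fun k _ => Finset.sum_le_sum fun i _ =>
      Finset.sum_le_sum fun j _ => point k i j
  have t1 : ∑ k, ∑ i, ∑ j, lam k * q k i j = 1 := by
    have : ∀ k, ∑ i, ∑ j, lam k * q k i j = lam k := by
      intro k
      rw [show ∑ i, ∑ j, lam k * q k i j = lam k * ∑ i, ∑ j, q k i j by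
        rw [Finset.mul_sum]
        exact Finset.sum_congr rfl fun i _ => (Finset.mul_sum _ _ _).symm]
      rw [hsum1 k, mul_one]
    simp_rw [this]
    exact hlamsum
  have t2 : ∑ k, ∑ i, ∑ j, al i * be j * q k i j = 1 := by
    rw [Finset.sum_comm]
    have : ∀ i, ∑ k, ∑ j, al i * be j * q k i j = al i := by
      intro i
      rw [Finset.sum_comm]
      have h3 : ∀ j, ∑ k, al i * be j * q k i j = al i * be j := by
        intro j
        rw [show ∑ k, al i * be j * q k i j = al i * be j * ∑ k, q k i j from
          (Finset.mul_sum _ _ _).symm, hsum2, mul_one]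
      simp_rw [h3]
      rw [← Finset.mul_sum, hbesum, mul_one]
    simp_rw [this]
    exact halsum
  have lhs_eq : ∑ k, ∑ i, ∑ j, (lam k * q k i j - al i * be j * q k i j) = 0 := by
    simp_rw [Finset.sum_sub_distrib]
    rw [t1, t2]
    ring
  have T1 : ∑ k, ∑ i, ∑ j, lam k * q k i j * Real.log (lam k)
      = ∑ k, lam k * Real.log (lam k) := by
    have : ∀ k, ∑ i, ∑ j, lam k * q k i j * Real.log (lam k)
        = (lam k * Real.log (lam k)) * (∑ i, ∑ j, q k i j) := by
      intro k
      rw [Finset.mul_sum]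
      refine Finset.sum_congr rfl fun i _ => ?_
      rw [Finset.mul_sum]
      exact Finset.sum_congr rfl fun j _ => by ring
    simp_rw [this, hsum1, mul_one]
  have T2 : ∑ k, ∑ i, ∑ j, lam k * q k i j * Real.log (al i)
      = ∑ i, al i * Real.log (al i) := by
    rw [Finset.sum_comm]
    refine Finset.sum_congr rfl fun i _ => ?_
    rw [Finset.sum_comm]
    rw [show ∑ j, ∑ k, lam k * q k i j * Real.log (al i)
        = (∑ j, ∑ k, lam k * q k i j) * Real.log (al i) by
      rw [Finset.sum_mul]
      refine Finset.sum_congr rfl fun j _ => ?_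
      rw [Finset.sum_mul]]
    rw [hal i, mul_comm]
  have T3 : ∑ k, ∑ i, ∑ j, lam k * q k i j * Real.log (be j)
      = ∑ j, be j * Real.log (be j) := by
    have swap1 : ∑ k, ∑ i, ∑ j, lam k * q k i j * Real.log (be j)
        = ∑ j, ∑ i, ∑ k, lam k * q k i j * Real.log (be j) := by
      calc ∑ k, ∑ i, ∑ j, lam k * q k i j * Real.log (be j)
          = ∑ k, ∑ j, ∑ i, lam k * q k i j * Real.log (be j) :=
            Finset.sum_congr rfl fun k _ => Finset.sum_comm
        _ = ∑ j, ∑ k, ∑ i, lam k * q k i j * Real.log (be j) := Finset.sum_comm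
        _ = ∑ j, ∑ i, ∑ k, lam k * q k i j * Real.log (be j) :=
            Finset.sum_congr rfl fun j _ => Finset.sum_comm
    rw [swap1]
    refine Finset.sum_congr rfl fun j _ => ?_
    rw [show ∑ i, ∑ k, lam k * q k i j * Real.log (be j)
        = (∑ i, ∑ k, lam k * q k i j) * Real.log (be j) by
      rw [Finset.sum_mul]
      refine Finset.sum_congr rfl fun i _ => ?_
      rw [Finset.sum_mul]]
    rw [hbe j, mul_comm]
  have rhs_eq : ∑ k, ∑ i, ∑ j, lam k * q k i j
        * (Real.log (lam k) - Real.log (al i) - Real.log (be j))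
      = (∑ k, lam k * Real.log (lam k)) - (∑ i, al i * Real.log (al i))
        - (∑ j, be j * Real.log (be j)) := by
    simp_rw [mul_sub, Finset.sum_sub_distrib]
    rw [T1, T2, T3]
  rw [lhs_eq, rhs_eq] at main
  simp only [Finset.sum_neg_distrib]
  linarith


end Core

section PT


variable {m n : Type*} [Fintype m] [DecidableEq m] [Fintype n] [DecidableEq n]
variable {ρ : Matrix (m × n) (m × n) ℂ}

lemma ptraceR_eq_sum (ρ : Matrix (m × n) (m × n) ℂ) :
    ptraceR ρ = ∑ j : n,
      ((Matrix.of fun (p : m × n) (i : m) => if p = (i, j) then (1:ℂ) else 0)ᴴ * ρ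
        * (Matrix.of fun (p : m × n) (i : m) => if p = (i, j) then (1:ℂ) else 0)) := by
  ext i i'
  rw [Matrix.sum_apply]
  refine Finset.sum_congr rfl fun j _ => ?_
  rw [Matrix.mul_apply]
  simp only [Matrix.of_apply, Matrix.mul_apply, Matrix.conjTranspose_apply, Matrix.of_apply]
  rw [Finset.sum_eq_single ((i', j) : m × n)]
  · rw [Finset.sum_eq_single ((i, j) : m × n)]
    · simp [ptraceR]
    · intro b _ hb
      simp [hb]
    · intro h; exact absurd (Finset.mem_univ _) h
  · intro b _ hb
    simp [hb]
  · intro h; exact absurd (Finset.mem_univ _) h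

lemma ptraceR_posSemidef (hρ : ρ.PosSemidef) : (ptraceR ρ).PosSemidef := by
  rw [ptraceR_eq_sum ρ]
  refine Finset.sum_induction _ (fun M : Matrix _ _ ℂ => M.PosSemidef) (fun a b ha hb => ha.add hb)
    Matrix.PosSemidef.zero (fun j _ => hρ.conjTranspose_mul_mul_same _)

lemma trace_ptraceR (ρ : Matrix (m × n) (m × n) ℂ) : (ptraceR ρ).trace = ρ.trace := by
  simp [Matrix.trace, ptraceR, Fintype.sum_prod_type, Matrix.diag]

lemma trace_ptraceL (ρ : Matrix (m × n) (m × n) ℂ) : (ptraceL ρ).trace = ρ.trace := by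
  rw [Matrix.trace, Matrix.trace, Fintype.sum_prod_type]
  rw [Finset.sum_comm]
  simp [ptraceL, Matrix.diag]

lemma ptraceL_eq_sum (ρ : Matrix (m × n) (m × n) ℂ) :
    ptraceL ρ = ∑ i : m,
      ((Matrix.of fun (p : m × n) (j : n) => if p = (i, j) then (1:ℂ) else 0)ᴴ * ρ
        * (Matrix.of fun (p : m × n) (j : n) => if p = (i, j) then (1:ℂ) else 0)) := by
  ext j j'
  rw [Matrix.sum_apply]
  refine Finset.sum_congr rfl fun i _ => ?_
  rw [Matrix.mul_apply]
  simp only [Matrix.of_apply, Matrix.mul_apply, Matrix.conjTranspose_apply, Matrix.of_apply]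
  rw [Finset.sum_eq_single ((i, j') : m × n)]
  · rw [Finset.sum_eq_single ((i, j) : m × n)]
    · simp [ptraceL]
    · intro b _ hb
      simp [hb]
    · intro h; exact absurd (Finset.mem_univ _) h
  · intro b _ hb
    simp [hb]
  · intro h; exact absurd (Finset.mem_univ _) h

lemma ptraceL_posSemidef (hρ : ρ.PosSemidef) : (ptraceL ρ).PosSemidef := by
  rw [ptraceL_eq_sum ρ]
  refine Finset.sum_induction _ (fun M : Matrix _ _ ℂ => M.PosSemidef) (fun a b ha hb => ha.add hb)
    Matrix.PosSemidef.zero (fun i _ => hρ.conjTranspose_mul_mul_same _)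


end PT

section SA

variable {m n : Type*} [Fintype m] [DecidableEq m] [Fintype n] [DecidableEq n]

local notation "conj'" => starRingEnd ℂ

lemma quad_diag {P Q : Type*} [Fintype P] [Fintype Q] (R₁ : Matrix P P ℂ) (V : Matrix P Q ℂ)
    (i : Q) :
    ∑ x, ∑ x', R₁ x' x * (V x i * conj' (V x' i)) = (Vᴴ * R₁ * V) i i := by
  rw [Matrix.mul_apply]
  refine Finset.sum_congr rfl fun x _ => ?_
  rw [Matrix.mul_apply, Finset.sum_mul]
  refine Finset.sum_congr rfl fun x' _ => ?_
  simp only [Matrix.conjTranspose_apply, RCLike.star_def]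
  ring

theorem subadd (ρ : Matrix (m × n) (m × n) ℂ) (hρ : ρ.PosSemidef) (h1 : ρ.trace = 1) :
    vnEnt ρ ≤ vnEnt (ptraceR ρ) + vnEnt (ptraceL ρ) := by
  classical
  have hH : ρ.IsHermitian := hρ.1
  have h₁ : (ptraceR ρ).PosSemidef := ptraceR_posSemidef hρ
  have h₂ : (ptraceL ρ).PosSemidef := ptraceL_posSemidef hρ
  set lam : (m × n) → ℝ := hH.eigenvalues with hlamdef
  set al : m → ℝ := h₁.1.eigenvalues with haldef
  set be : n → ℝ := h₂.1.eigenvalues with hbedef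
  set U : Matrix (m × n) (m × n) ℂ := (hH.eigenvectorUnitary : Matrix (m × n) (m × n) ℂ) with hUdef
  set A : Matrix m m ℂ := (h₁.1.eigenvectorUnitary : Matrix m m ℂ) with hAdef
  set B : Matrix n n ℂ := (h₂.1.eigenvectorUnitary : Matrix n n ℂ) with hBdef
  have hU1 : U * Uᴴ = 1 := by
    rw [← Matrix.star_eq_conjTranspose]
    exact Matrix.mem_unitaryGroup_iff.mp (hH.eigenvectorUnitary).2
  have hU2 : Uᴴ * U = 1 := by
    rw [← Matrix.star_eq_conjTranspose]
    exact Matrix.mem_unitaryGroup_iff'.mp (hH.eigenvectorUnitary).2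
  have hA1 : A * Aᴴ = 1 := by
    rw [← Matrix.star_eq_conjTranspose]
    exact Matrix.mem_unitaryGroup_iff.mp (h₁.1.eigenvectorUnitary).2
  have hA2 : Aᴴ * A = 1 := by
    rw [← Matrix.star_eq_conjTranspose]
    exact Matrix.mem_unitaryGroup_iff'.mp (h₁.1.eigenvectorUnitary).2
  have hB1 : B * Bᴴ = 1 := by
    rw [← Matrix.star_eq_conjTranspose]
    exact Matrix.mem_unitaryGroup_iff.mp (h₂.1.eigenvectorUnitary).2
  have hB2 : Bᴴ * B = 1 := by
    rw [← Matrix.star_eq_conjTranspose]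
    exact Matrix.mem_unitaryGroup_iff'.mp (h₂.1.eigenvectorUnitary).2
  set W : Matrix (m × n) (m × n) ℂ :=
    Matrix.of (fun (p : m × n) (ij : m × n) => A p.1 ij.1 * B p.2 ij.2) with hWdef
  have hWcomp : ∀ p p' : m × n, ∑ ij : m × n, W p ij * conj' (W p' ij)
      = if p = p' then 1 else 0 := by
    intro p p'
    rw [Fintype.sum_prod_type]
    calc ∑ i, ∑ j, W p (i, j) * conj' (W p' (i, j))
        = (∑ i, A p.1 i * conj' (A p'.1 i)) * (∑ j, B p.2 j * conj' (B p'.2 j)) := by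
          rw [Finset.sum_mul_sum]
          refine Finset.sum_congr rfl fun i _ => Finset.sum_congr rfl fun j _ => ?_
          simp only [hWdef, Matrix.of_apply, _root_.map_mul]
          ring
      _ = (if p.1 = p'.1 then 1 else 0) * (if p.2 = p'.2 then 1 else 0) := by
          rw [comp_of A hA1 p.1 p'.1, comp_of B hB1 p.2 p'.2]
      _ = if p = p' then 1 else 0 := by
          by_cases e1 : p.1 = p'.1 <;> by_cases e2 : p.2 = p'.2 <;>
            simp [Prod.ext_iff, e1, e2]
  set c : (m × n) → m → n → ℂ := fun k i j => ∑ p, conj' (U p k) * W p (i, j) with hcdef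
  set q : (m × n) → m → n → ℝ := fun k i j => Complex.normSq (c k i j) with hqdef
  have hqC : ∀ k i j, ((q k i j : ℝ) : ℂ) = c k i j * conj' (c k i j) :=
    fun k i j => (Complex.mul_conj _).symm
  -- F1
  have F1 : ∀ k, ∑ i, ∑ j, q k i j = 1 := by
    intro k
    have hcX : ∀ ij : m × n, conj' (∑ p, conj' (W p ij) * U p k) = c k ij.1 ij.2 := by
      intro ij
      rw [_root_.map_sum]
      refine Finset.sum_congr rfl fun p _ => ?_
      simp only [_root_.map_mul, Complex.conj_conj]
      ring
    have F1C : ∑ ij : m × n, ((q k ij.1 ij.2 : ℝ) : ℂ) = 1 := by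
      calc ∑ ij : m × n, ((q k ij.1 ij.2 : ℝ) : ℂ)
          = ∑ ij : m × n, (∑ p, conj' (W p ij) * U p k)
              * conj' (∑ p', conj' (W p' ij) * U p' k) := by
            refine Finset.sum_congr rfl fun ij _ => ?_
            rw [hqC, ← hcX ij, Complex.conj_conj]
            ring
        _ = ∑ p, U p k * conj' (U p k) :=
            sum_inner_conj W hWcomp (fun p => U p k) (fun p => U p k)
        _ = 1 := by
            rw [show ∑ p, U p k * conj' (U p k) = ∑ p, conj' (U p k) * U p k from
              Finset.sum_congr rfl fun p _ => mul_comm _ _]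
            simpa using orth_of U hU2 k k
    have := F1C
    rw [Fintype.sum_prod_type] at this
    exact_mod_cast this
  -- F2
  have F2 : ∀ i j, ∑ k, q k i j = 1 := by
    intro i j
    have F2C : ∑ k, ((q k i j : ℝ) : ℂ) = 1 := by
      calc ∑ k, ((q k i j : ℝ) : ℂ)
          = ∑ k, (∑ p, conj' (U p k) * W p (i, j))
              * conj' (∑ p', conj' (U p' k) * W p' (i, j)) := by
            refine Finset.sum_congr rfl fun k _ => ?_
            rw [hqC]
        _ = ∑ p, W p (i, j) * conj' (W p (i, j)) :=
            sum_inner_conj U (comp_of U hU1) (fun p => W p (i, j)) (fun p => W p (i, j))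
        _ = (∑ x, A x i * conj' (A x i)) * (∑ y, B y j * conj' (B y j)) := by
            rw [Fintype.sum_prod_type, Finset.sum_mul_sum]
            refine Finset.sum_congr rfl fun x _ => Finset.sum_congr rfl fun y _ => ?_
            simp only [hWdef, Matrix.of_apply, _root_.map_mul]
            ring
        _ = 1 := by
            rw [show ∑ x, A x i * conj' (A x i) = ∑ x, conj' (A x i) * A x i from
              Finset.sum_congr rfl fun x _ => mul_comm _ _]
            rw [show ∑ y, B y j * conj' (B y j) = ∑ y, conj' (B y j) * B y j from
              Finset.sum_congr rfl fun y _ => mul_comm _ _]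
            have ha := orth_of A hA2 i i
            have hb := orth_of B hB2 j j
            simp [ha, hb]
    exact_mod_cast F2C
  -- entrywise spectral decomposition
  have hent : ∀ p p', ρ p p' = ∑ k, ((lam k : ℝ) : ℂ) * (U p k * conj' (U p' k)) :=
    entry_spectral hH
  have hcc : ∀ k i j, c k i j * conj' (c k i j)
      = ∑ p, ∑ p', (W p (i, j) * conj' (W p' (i, j))) * (U p' k * conj' (U p k)) := by
    intro k i j
    rw [show conj' (c k i j) = ∑ p', U p' k * conj' (W p' (i, j)) from by
      rw [hcdef]
      simp only []
      rw [_root_.map_sum]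
      refine Finset.sum_congr rfl fun p' _ => ?_
      simp only [_root_.map_mul, Complex.conj_conj]]
    rw [hcdef]
    simp only []
    rw [Finset.sum_mul_sum]
    refine Finset.sum_congr rfl fun p _ => Finset.sum_congr rfl fun p' _ => ?_
    ring
  have F3C : ∀ i j, ∑ k, ((lam k : ℝ) : ℂ) * ((q k i j : ℝ) : ℂ)
      = ∑ p : m × n, ∑ p' : m × n, ρ p' p * (W p (i, j) * conj' (W p' (i, j))) := by
    intro i j
    calc ∑ k, ((lam k : ℝ) : ℂ) * ((q k i j : ℝ) : ℂ)
        = ∑ k, ∑ p, ∑ p', ((lam k : ℝ) : ℂ)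
            * ((W p (i, j) * conj' (W p' (i, j))) * (U p' k * conj' (U p k))) := by
          refine Finset.sum_congr rfl fun k _ => ?_
          rw [hqC, hcc, Finset.mul_sum]
          refine Finset.sum_congr rfl fun p _ => ?_
          rw [Finset.mul_sum]
      _ = ∑ p, ∑ p', (W p (i, j) * conj' (W p' (i, j)))
            * (∑ k, ((lam k : ℝ) : ℂ) * (U p' k * conj' (U p k))) := by
          rw [Finset.sum_comm]
          refine Finset.sum_congr rfl fun p _ => ?_
          rw [Finset.sum_comm]
          refine Finset.sum_congr rfl fun p' _ => ?_
          rw [Finset.mul_sum]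
          refine Finset.sum_congr rfl fun k _ => ?_
          ring
      _ = ∑ p, ∑ p', ρ p' p * (W p (i, j) * conj' (W p' (i, j))) := by
          refine Finset.sum_congr rfl fun p _ => Finset.sum_congr rfl fun p' _ => ?_
          rw [← hent p' p]
          ring
  -- hal
  have halC : ∀ i, ∑ j, ∑ k, ((lam k : ℝ) : ℂ) * ((q k i j : ℝ) : ℂ) = ((al i : ℝ) : ℂ) := by
    intro i
    rw [Finset.sum_congr rfl fun j _ => F3C i j]
    calc ∑ j, ∑ p : m × n, ∑ p' : m × n, ρ p' p * (W p (i, j) * conj' (W p' (i, j)))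
        = ∑ p : m × n, ∑ p' : m × n, ρ p' p * (A p.1 i * conj' (A p'.1 i))
            * (∑ j, B p.2 j * conj' (B p'.2 j)) := by
          rw [Finset.sum_comm]
          refine Finset.sum_congr rfl fun p _ => ?_
          rw [Finset.sum_comm]
          refine Finset.sum_congr rfl fun p' _ => ?_
          rw [Finset.mul_sum]
          refine Finset.sum_congr rfl fun j _ => ?_
          simp only [hWdef, Matrix.of_apply, _root_.map_mul]
          ring
      _ = ∑ p : m × n, ∑ p' : m × n, ρ p' p * (A p.1 i * conj' (A p'.1 i))
            * (if p.2 = p'.2 then 1 else 0) := by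
          refine Finset.sum_congr rfl fun p _ => Finset.sum_congr rfl fun p' _ => ?_
          rw [comp_of B hB1 p.2 p'.2]
      _ = ∑ x, ∑ y, ∑ x', ∑ y', ρ (x', y') (x, y) * (A x i * conj' (A x' i))
            * (if y = y' then 1 else 0) := by
          rw [Fintype.sum_prod_type]
          refine Finset.sum_congr rfl fun x _ => Finset.sum_congr rfl fun y _ => ?_
          rw [Fintype.sum_prod_type]
      _ = ∑ x, ∑ y, ∑ x', ρ (x', y) (x, y) * (A x i * conj' (A x' i)) := by
          refine Finset.sum_congr rfl fun x _ => Finset.sum_congr rfl fun y _ =>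
            Finset.sum_congr rfl fun x' _ => ?_
          rw [Finset.sum_eq_single y]
          · simp
          · intro b _ hb
            simp [hb.symm]
          · intro h; exact absurd (Finset.mem_univ _) h
      _ = ∑ x, ∑ x', (ptraceR ρ) x' x * (A x i * conj' (A x' i)) := by
          refine Finset.sum_congr rfl fun x _ => ?_
          rw [Finset.sum_comm]
          refine Finset.sum_congr rfl fun x' _ => ?_
          rw [show (ptraceR ρ) x' x = ∑ y, ρ (x', y) (x, y) from rfl, Finset.sum_mul]
      _ = (Aᴴ * ptraceR ρ * A) i i := quad_diag (ptraceR ρ) A i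
      _ = ((al i : ℝ) : ℂ) := by
          have hd0 := h₁.1.conjStarAlgAut_star_eigenvectorUnitary
          rw [Unitary.conjStarAlgAut_star_apply] at hd0
          have hd := congrFun (congrFun hd0 i) i
          rw [Matrix.star_eq_conjTranspose] at hd
          rw [hd, Matrix.diagonal_apply_eq]
          rfl
  have hbeC : ∀ j, ∑ i, ∑ k, ((lam k : ℝ) : ℂ) * ((q k i j : ℝ) : ℂ) = ((be j : ℝ) : ℂ) := by
    intro j
    rw [Finset.sum_congr rfl fun i _ => F3C i j]
    calc ∑ i, ∑ p : m × n, ∑ p' : m × n, ρ p' p * (W p (i, j) * conj' (W p' (i, j)))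
        = ∑ p : m × n, ∑ p' : m × n, ρ p' p * (B p.2 j * conj' (B p'.2 j))
            * (∑ i, A p.1 i * conj' (A p'.1 i)) := by
          rw [Finset.sum_comm]
          refine Finset.sum_congr rfl fun p _ => ?_
          rw [Finset.sum_comm]
          refine Finset.sum_congr rfl fun p' _ => ?_
          rw [Finset.mul_sum]
          refine Finset.sum_congr rfl fun i _ => ?_
          simp only [hWdef, Matrix.of_apply, _root_.map_mul]
          ring
      _ = ∑ p : m × n, ∑ p' : m × n, ρ p' p * (B p.2 j * conj' (B p'.2 j))
            * (if p.1 = p'.1 then 1 else 0) := by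
          refine Finset.sum_congr rfl fun p _ => Finset.sum_congr rfl fun p' _ => ?_
          rw [comp_of A hA1 p.1 p'.1]
      _ = ∑ x, ∑ y, ∑ x', ∑ y', ρ (x', y') (x, y) * (B y j * conj' (B y' j))
            * (if x = x' then 1 else 0) := by
          rw [Fintype.sum_prod_type]
          refine Finset.sum_congr rfl fun x _ => Finset.sum_congr rfl fun y _ => ?_
          rw [Fintype.sum_prod_type]
      _ = ∑ x, ∑ y, ∑ y', ρ (x, y') (x, y) * (B y j * conj' (B y' j)) := by
          refine Finset.sum_congr rfl fun x _ => Finset.sum_congr rfl fun y _ => ?_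
          rw [Finset.sum_comm]
          refine Finset.sum_congr rfl fun y' _ => ?_
          rw [Finset.sum_eq_single x]
          · simp
          · intro b _ hb
            simp [hb.symm]
          · intro h; exact absurd (Finset.mem_univ _) h
      _ = ∑ y, ∑ y', (ptraceL ρ) y' y * (B y j * conj' (B y' j)) := by
          rw [Finset.sum_comm]
          refine Finset.sum_congr rfl fun y _ => ?_
          rw [Finset.sum_comm]
          refine Finset.sum_congr rfl fun y' _ => ?_
          rw [show (ptraceL ρ) y' y = ∑ x, ρ (x, y') (x, y) from rfl, Finset.sum_mul]
      _ = (Bᴴ * ptraceL ρ * B) j j := quad_diag (ptraceL ρ) B j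
      _ = ((be j : ℝ) : ℂ) := by
          have hd0 := h₂.1.conjStarAlgAut_star_eigenvectorUnitary
          rw [Unitary.conjStarAlgAut_star_apply] at hd0
          have hd := congrFun (congrFun hd0 j) j
          rw [Matrix.star_eq_conjTranspose] at hd
          rw [hd, Matrix.diagonal_apply_eq]
          rfl
  have hal : ∀ i, ∑ j, ∑ k, lam k * q k i j = al i := by
    intro i
    have := halC i
    exact_mod_cast this
  have hbe : ∀ j, ∑ i, ∑ k, lam k * q k i j = be j := by
    intro j
    have := hbeC j
    exact_mod_cast this
  have hlamsum : ∑ k, lam k = 1 := by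
    have := trace_eq_sum_eigen hH
    rw [h1] at this
    exact_mod_cast this.symm
  have halsum : ∑ i, al i = 1 := by
    have := trace_eq_sum_eigen h₁.1
    rw [trace_ptraceR, h1] at this
    exact_mod_cast this.symm
  have hbesum : ∑ j, be j = 1 := by
    have := trace_eq_sum_eigen h₂.1
    rw [trace_ptraceL, h1] at this
    exact_mod_cast this.symm
  rw [vnEnt_eq hH, vnEnt_eq h₁.1, vnEnt_eq h₂.1]
  exact sa_core lam al be q (fun k => hρ.eigenvalues_nonneg k)
    (fun k i j => Complex.normSq_nonneg _) F1 F2 hlamsum hal hbe halsum hbesum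

end SA

section Poly2

lemma charpoly_diag {p : Type*} [Fintype p] [DecidableEq p] (d : p → ℂ) :
    (Matrix.diagonal d).charpoly = ∏ i, (X - C (d i)) := by
  apply Polynomial.funext
  intro x
  rw [eval_charpoly]
  rw [show x • (1 : Matrix p p ℂ) - Matrix.diagonal d
      = Matrix.diagonal (fun i => x - d i) by
    rw [← Matrix.diagonal_one, ← Matrix.diagonal_smul, Matrix.diagonal_sub]
    congr 1
    funext i
    simp]
  rw [Matrix.det_diagonal]
  simp [Polynomial.eval_prod]

end Poly2

section Half

variable {m n : Type*} [Fintype m] [DecidableEq m] [Fintype n] [DecidableEq n]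

local notation "conj'" => starRingEnd ℂ

theorem half (ρ : Matrix (m × n) (m × n) ℂ) (hρ : ρ.PosSemidef) (h1 : ρ.trace = 1) :
    vnEnt (ptraceR ρ) ≤ vnEnt ρ + vnEnt (ptraceL ρ) := by
  classical
  have hH : ρ.IsHermitian := hρ.1
  set lam : (m × n) → ℝ := hH.eigenvalues with hlamdef
  set U : Matrix (m × n) (m × n) ℂ := (hH.eigenvectorUnitary : Matrix (m × n) (m × n) ℂ) with hUdef
  have hU2 : Uᴴ * U = 1 := by
    rw [← Matrix.star_eq_conjTranspose]
    exact Matrix.mem_unitaryGroup_iff'.mp (hH.eigenvectorUnitary).2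
  have hlam0 : ∀ k, 0 ≤ lam k := hρ.eigenvalues_nonneg
  have hent : ∀ p p', ρ p p' = ∑ k, ((lam k : ℝ) : ℂ) * (U p k * conj' (U p' k)) :=
    entry_spectral hH
  set y : Matrix m (n × (m × n)) ℂ :=
    Matrix.of (fun i jk => ((Real.sqrt (lam jk.2) : ℝ) : ℂ) * U (i, jk.1) jk.2) with hydef
  have hyy : y * yᴴ = ptraceR ρ := by
    ext i i'
    rw [Matrix.mul_apply]
    rw [show (ptraceR ρ) i i' = ∑ j, ρ (i, j) (i', j) from rfl]
    rw [Fintype.sum_prod_type]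
    refine Finset.sum_congr rfl fun j _ => ?_
    rw [hent (i, j) (i', j)]
    refine Finset.sum_congr rfl fun k _ => ?_
    simp only [hydef, Matrix.conjTranspose_apply, RCLike.star_def, Matrix.of_apply,
      _root_.map_mul, Complex.conj_ofReal]
    rw [show (((Real.sqrt (lam k) : ℝ) : ℂ)) * U (i, j) k
        * ((((Real.sqrt (lam k) : ℝ) : ℂ)) * conj' (U (i', j) k))
        = (((Real.sqrt (lam k) * Real.sqrt (lam k) : ℝ) : ℂ))
          * (U (i, j) k * conj' (U (i', j) k)) by push_cast; ring]
    rw [Real.mul_self_sqrt (hlam0 k)]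
  set σ : Matrix (n × (m × n)) (n × (m × n)) ℂ := (yᴴ * y)ᵀ with hσdef
  have hσpsd : σ.PosSemidef := (Matrix.posSemidef_conjTranspose_mul_self y).transpose
  have hσtr : σ.trace = 1 := by
    rw [hσdef, Matrix.trace_transpose, Matrix.trace_mul_comm, hyy, trace_ptraceR, h1]
  have hvnσ : vnEnt σ = vnEnt (ptraceR ρ) := by
    have hherm : σ.IsHermitian := hσpsd.1
    have hcp : (ptraceR ρ).charpoly * X ^ (Fintype.card (n × (m × n)))
        = σ.charpoly * X ^ (Fintype.card m) := by
      rw [hσdef, charpoly_transpose, ← hyy]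
      exact charpoly_mul_comm_pow y yᴴ
    rw [vnEnt_eq hherm, vnEnt_eq (ptraceR_posSemidef hρ).1]
    exact (sum_f_eigen_eq (ptraceR_posSemidef hρ).1 hherm hcp
      (fun x => -(x * Real.log x)) (by simp)).symm
  have hσapp : ∀ a b : n × (m × n), σ a b = ∑ i, conj' (y i b) * y i a := by
    intro a b
    rw [hσdef, Matrix.transpose_apply, Matrix.mul_apply]
    refine Finset.sum_congr rfl fun i _ => ?_
    rw [Matrix.conjTranspose_apply, RCLike.star_def]
  have hptR : ptraceR σ = ptraceL ρ := by
    ext j j'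
    show ∑ k : m × n, σ (j, k) (j', k) = ∑ i, ρ (i, j) (i, j')
    rw [Finset.sum_congr rfl fun k _ => hσapp (j, k) (j', k)]
    rw [Finset.sum_comm]
    refine Finset.sum_congr rfl fun i _ => ?_
    rw [hent (i, j) (i, j')]
    refine Finset.sum_congr rfl fun k _ => ?_
    simp only [hydef, Matrix.of_apply, _root_.map_mul, Complex.conj_ofReal]
    rw [show (((Real.sqrt (lam k) : ℝ) : ℂ)) * conj' (U (i, j') k)
        * ((((Real.sqrt (lam k) : ℝ) : ℂ)) * U (i, j) k)
        = (((Real.sqrt (lam k) * Real.sqrt (lam k) : ℝ) : ℂ))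
          * (U (i, j) k * conj' (U (i, j') k)) by push_cast; ring]
    rw [Real.mul_self_sqrt (hlam0 k)]
  have hptL : ptraceL σ = Matrix.diagonal (fun k : m × n => ((lam k : ℝ) : ℂ)) := by
    ext k k'
    show ∑ j, σ (j, k) (j, k') = _
    rw [Finset.sum_congr rfl fun j _ => hσapp (j, k) (j, k')]
    have e1 : ∑ j, ∑ i, conj' (U (i, j) k') * U (i, j) k = if k' = k then 1 else 0 := by
      rw [← orth_of U hU2 k' k]
      rw [Fintype.sum_prod_type]
      rw [Finset.sum_comm]
    calc ∑ j, ∑ i, conj' (y i (j, k')) * y i (j, k)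
        = ∑ j, ∑ i, (((Real.sqrt (lam k') : ℝ) : ℂ)) * (((Real.sqrt (lam k) : ℝ) : ℂ))
            * (conj' (U (i, j) k') * U (i, j) k) := by
          refine Finset.sum_congr rfl fun j _ => Finset.sum_congr rfl fun i _ => ?_
          simp only [hydef, Matrix.of_apply, _root_.map_mul, Complex.conj_ofReal]
          ring
      _ = (((Real.sqrt (lam k') : ℝ) : ℂ)) * (((Real.sqrt (lam k) : ℝ) : ℂ))
            * ∑ j, ∑ i, conj' (U (i, j) k') * U (i, j) k := by
          rw [Finset.mul_sum]
          refine Finset.sum_congr rfl fun j _ => ?_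
          rw [Finset.mul_sum]
      _ = Matrix.diagonal (fun k : m × n => ((lam k : ℝ) : ℂ)) k k' := by
          rw [e1]
          by_cases hkk : k' = k
          · subst hkk
            rw [Matrix.diagonal_apply_eq, if_pos rfl, mul_one, ← Complex.ofReal_mul,
              Real.mul_self_sqrt (hlam0 k')]
          · rw [Matrix.diagonal_apply_ne' _ hkk]
            simp [hkk]
  have hsa := subadd σ hσpsd hσtr
  rw [hvnσ, hptR, hptL] at hsa
  have hdiag : vnEnt (Matrix.diagonal (fun k : m × n => ((lam k : ℝ) : ℂ))) = vnEnt ρ := by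
    have hdh : (Matrix.diagonal (fun k : m × n => ((lam k : ℝ) : ℂ))).IsHermitian := by
      rw [Matrix.IsHermitian, Matrix.diagonal_conjTranspose,
        show (star fun k : m × n => ((lam k : ℝ) : ℂ)) = fun k : m × n => ((lam k : ℝ) : ℂ)
          from funext fun k => by rw [Pi.star_apply]; exact Complex.conj_ofReal _]
    have hcpe : (Matrix.diagonal (fun k : m × n => ((lam k : ℝ) : ℂ))).charpoly
        = ρ.charpoly := by
      rw [charpoly_diag, charpoly_hermitian hH]
    rw [vnEnt_eq hdh, vnEnt_eq hH]
    exact sum_f_eigen_eq hdh hH (by rw [hcpe]) (fun x => -(x * Real.log x)) (by simp)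
  rw [hdiag] at hsa
  linarith

end Half

end AL

/-- Araki–Lieb triangle inequality. -/
theorem araki_lieb_triangle {m n : Type*} [Fintype m] [DecidableEq m] [Fintype n] [DecidableEq n]
    (ρ : Matrix (m × n) (m × n) ℂ) (hρ : ρ.PosSemidef) (h1 : Matrix.trace ρ = 1) :
    |vnEnt (ptraceR ρ) - vnEnt (ptraceL ρ)| ≤ vnEnt ρ := by
  classical
  rw [abs_sub_le_iff]
  constructor
  · have := AL.half ρ hρ h1
    linarith
  · set σ' : Matrix (n × m) (n × m) ℂ := ρ.submatrix Prod.swap Prod.swap with hσ'def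
    have hpsd' : σ'.PosSemidef := hρ.submatrix Prod.swap
    have htr' : σ'.trace = 1 := by
      rw [← h1]
      calc σ'.trace = ∑ p : n × m, ρ (Prod.swap p) (Prod.swap p) := rfl
        _ = ∑ p : m × n, ρ p p :=
            Fintype.sum_equiv (Equiv.prodComm n m) _ _ (fun p => rfl)
        _ = ρ.trace := rfl
    have hR : ptraceR σ' = ptraceL ρ := by
      ext j j'
      rfl
    have hL : ptraceL σ' = ptraceR ρ := by
      ext i i'
      rfl
    have hvn : vnEnt σ' = vnEnt ρ := by
      have hherm' : σ'.IsHermitian := hpsd'.1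
      have hcpe : σ'.charpoly = ρ.charpoly := by
        rw [show σ' = (Matrix.reindex (Equiv.prodComm m n) (Equiv.prodComm m n)) ρ from by
          ext p p'
          rfl]
        exact Matrix.charpoly_reindex _ ρ
      have hcard : Fintype.card (m × n) = Fintype.card (n × m) := by
        simp [Fintype.card_prod, Nat.mul_comm]
      rw [AL.vnEnt_eq hherm', AL.vnEnt_eq hρ.1]
      exact AL.sum_f_eigen_eq hherm' hρ.1 (by rw [hcpe, hcard])
        (fun x => -(x * Real.log x)) (by simp)
    have := AL.half σ' hpsd' htr'
    rw [hR, hL, hvn] at this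
    linarith
end

section
/- For strictly positive density matrices ρ₁₂, γ₁₂ on H₁ ⊗ H₂ with Tr ρ₁₂ = Tr γ₁₂, the relative entropy is monotone under partial trace: H(ρ₂, γ₂) ≤ H(ρ₁₂, γ₁₂), where ρ₂ = Tr₁ ρ₁₂ and γ₂ = Tr₁ γ₁₂. -/
open Matrix
open scoped ComplexOrder

namespace RelEntAux

open Filter Topology

open Filter Topology

lemma log_ratio_tendsto (x : ℝ) :
    Tendsto (fun T : ℝ => Real.log (x + T) - Real.log T) atTop (nhds 0) := by
  have h1 : Tendsto (fun T : ℝ => 1 + x / T) atTop (nhds 1) := by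
    have := tendsto_const_nhds (α := ℝ) (x := (1:ℝ)) (f := atTop)
    simpa using this.add (tendsto_const_nhds.div_atTop tendsto_id)
  have h2 : Tendsto (fun T : ℝ => Real.log (1 + x / T)) atTop (nhds 0) := by
    have := (Real.continuousAt_log (x := 1) one_ne_zero).tendsto.comp h1
    simpa [Function.comp_def] using this
  refine h2.congr' ?_
  filter_upwards [eventually_gt_atTop (0:ℝ), eventually_gt_atTop (max 0 (-x))] with T hT hT'
  have hxT : 0 < x + T := by
    have := lt_of_le_of_lt (le_max_right 0 (-x)) hT'
    linarith
  rw [show 1 + x / T = (x + T) / T by field_simp; ring]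
  rw [Real.log_div (ne_of_gt hxT) (ne_of_gt hT)]

lemma key_scalar {ι κ : Type*} [Fintype ι] [Fintype κ]
    (c x : ι → ℝ) (d y : κ → ℝ)
    (hc : ∀ i, 0 ≤ c i) (hx : ∀ i, 0 < x i) (hd : ∀ j, 0 ≤ d j) (hy : ∀ j, 0 < y j)
    (hsum : ∑ i, c i = ∑ j, d j)
    (hres : ∀ s : ℝ, 0 ≤ s → ∑ j, d j / (y j + s) ≤ ∑ i, c i / (x i + s)) :
    ∑ i, c i * Real.log (x i) ≤ ∑ j, d j * Real.log (y j) := by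
  set h : ℝ → ℝ := fun T => (∑ i, c i * Real.log (x i + T)) - ∑ j, d j * Real.log (y j + T)
    with hh
  -- derivative
  have hder : ∀ T : ℝ, 0 ≤ T → HasDerivAt h
      ((∑ i, c i * (x i + T)⁻¹) - ∑ j, d j * (y j + T)⁻¹) T := by
    intro T hT
    have h1 : ∀ (z : ℝ), 0 < z → HasDerivAt (fun T => Real.log (z + T)) ((z + T)⁻¹) T := by
      intro z hz
      have : HasDerivAt (fun T : ℝ => z + T) 1 T := (hasDerivAt_id T).const_add z
      simpa [Function.comp_def] using (Real.hasDerivAt_log (by positivity)).comp T this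
    exact HasDerivAt.sub
      (HasDerivAt.fun_sum fun i _ => ((h1 (x i) (hx i)).const_mul (c i)))
      (HasDerivAt.fun_sum fun j _ => ((h1 (y j) (hy j)).const_mul (d j)))
  -- monotone on Ici 0
  have hmono : MonotoneOn h (Set.Ici 0) := by
    apply monotoneOn_of_hasDerivWithinAt_nonneg (convex_Ici 0)
      (f' := fun T => (∑ i, c i * (x i + T)⁻¹) - ∑ j, d j * (y j + T)⁻¹)
    · intro T hT
      exact (hder T hT).continuousAt.continuousWithinAt
    · intro T hT
      rw [interior_Ici] at hT
      exact (hder T (le_of_lt hT)).hasDerivWithinAt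
    · intro T hT
      rw [interior_Ici] at hT
      have := hres T (le_of_lt hT)
      simp only [div_eq_mul_inv] at this
      linarith
  -- limit of h at infinity is 0
  have hlim : Tendsto h atTop (nhds 0) := by
    have hrw : ∀ᶠ T in atTop, h T =
        (∑ i, c i * (Real.log (x i + T) - Real.log T))
          - ∑ j, d j * (Real.log (y j + T) - Real.log T) := by
      filter_upwards [eventually_gt_atTop (0:ℝ)] with T hT
      simp only [hh, mul_sub, Finset.sum_sub_distrib]
      rw [← Finset.sum_mul, ← Finset.sum_mul, hsum]
      ring
    have l1 : Tendsto (fun T => (∑ i, c i * (Real.log (x i + T) - Real.log T))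
        - ∑ j, d j * (Real.log (y j + T) - Real.log T)) atTop (nhds 0) := by
      have t1 : Tendsto (fun T => ∑ i, c i * (Real.log (x i + T) - Real.log T)) atTop
          (nhds 0) := by
        have := tendsto_finset_sum (Finset.univ (α := ι))
          (fun i _ => (log_ratio_tendsto (x i)).const_mul (c i))
        simpa using this
      have t2 : Tendsto (fun T => ∑ j, d j * (Real.log (y j + T) - Real.log T)) atTop
          (nhds 0) := by
        have := tendsto_finset_sum (Finset.univ (α := κ))
          (fun j _ => (log_ratio_tendsto (y j)).const_mul (d j))
        simpa using this
      simpa using t1.sub t2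
    exact Tendsto.congr' (by filter_upwards [hrw] with T hT; rw [hT]) l1
  -- conclude
  have hle : h 0 ≤ 0 := by
    apply ge_of_tendsto hlim
    filter_upwards [eventually_ge_atTop (0:ℝ)] with T hT
    exact hmono Set.self_mem_Ici hT hT
  simpa [hh, Finset.sum_sub_distrib] using hle

lemma key_scalar2 {ι₁ ι₂ κ₁ κ₂ : Type*} [Fintype ι₁] [Fintype ι₂] [Fintype κ₁] [Fintype κ₂]
    (c x : ι₁ → ι₂ → ℝ) (d y : κ₁ → κ₂ → ℝ)
    (hc : ∀ i j, 0 ≤ c i j) (hx : ∀ i j, 0 < x i j)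
    (hd : ∀ i j, 0 ≤ d i j) (hy : ∀ i j, 0 < y i j)
    (hsum : ∑ i, ∑ j, c i j = ∑ i, ∑ j, d i j)
    (hres : ∀ s : ℝ, 0 ≤ s →
      ∑ i, ∑ j, d i j / (y i j + s) ≤ ∑ i, ∑ j, c i j / (x i j + s)) :
    ∑ i, ∑ j, c i j * Real.log (x i j) ≤ ∑ i, ∑ j, d i j * Real.log (y i j) := by
  have := key_scalar (fun p : ι₁ × ι₂ => c p.1 p.2) (fun p => x p.1 p.2)
    (fun p : κ₁ × κ₂ => d p.1 p.2) (fun p => y p.1 p.2)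
    (fun p => hc p.1 p.2) (fun p => hx p.1 p.2) (fun p => hd p.1 p.2) (fun p => hy p.1 p.2)
    (by rw [Fintype.sum_prod_type, Fintype.sum_prod_type]; exact hsum)
    (fun s hs => by
      rw [Fintype.sum_prod_type, Fintype.sum_prod_type]
      exact hres s hs)
  rw [Fintype.sum_prod_type, Fintype.sum_prod_type] at this
  exact this



variable {k : Type*} [Fintype k] [DecidableEq k]

section FCM

variable {A : Matrix k k ℂ} (hA : A.PosDef)

noncomputable def evU (hA : A.PosDef) : Matrix k k ℂ := hA.1.eigenvectorUnitary

noncomputable def evs (hA : A.PosDef) : k → ℝ := hA.1.eigenvalues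

lemma evs_pos (i : k) : 0 < evs hA i := hA.eigenvalues_pos i

lemma evU_star_mul_self : star (evU hA) * evU hA = 1 :=
  ((Unitary.mem_iff).mp hA.1.eigenvectorUnitary.2).1

lemma evU_mul_star_self : evU hA * star (evU hA) = 1 :=
  ((Unitary.mem_iff).mp hA.1.eigenvectorUnitary.2).2

noncomputable def fcm (hA : A.PosDef) (f : ℝ → ℝ) : Matrix k k ℂ :=
  evU hA * diagonal (fun i => (f (evs hA i) : ℂ)) * star (evU hA)

lemma fcm_congr {f g : ℝ → ℝ} (h : ∀ i, f (evs hA i) = g (evs hA i)) :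
    fcm hA f = fcm hA g := by
  unfold fcm
  have : (fun i => (f (evs hA i) : ℂ)) = fun i => (g (evs hA i) : ℂ) :=
    funext fun i => by rw [h]
  rw [this]

lemma diag_cast : diagonal (fun i => (evs hA i : ℂ)) =
    diagonal (RCLike.ofReal ∘ hA.1.eigenvalues) := rfl

lemma fcm_id : fcm hA id = A := by
  unfold fcm
  rw [show (fun i => ((id (evs hA i) : ℝ) : ℂ)) = fun i => ((evs hA i : ℝ) : ℂ) from rfl,
    diag_cast]
  exact hA.1.spectral_theorem.symm

lemma fcm_one : fcm hA (fun _ => 1) = 1 := by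
  unfold fcm
  simp [evU_mul_star_self hA]

lemma fcm_mul (f g : ℝ → ℝ) : fcm hA f * fcm hA g = fcm hA (fun t => f t * g t) := by
  unfold fcm
  simp only [Matrix.mul_assoc]
  rw [← Matrix.mul_assoc (star (evU hA)) (evU hA), evU_star_mul_self hA, one_mul,
    ← Matrix.mul_assoc (diagonal _) (diagonal _), diagonal_mul_diagonal]
  norm_cast

lemma fcm_conjTranspose (f : ℝ → ℝ) : (fcm hA f)ᴴ = fcm hA f := by
  unfold fcm
  rw [conjTranspose_mul, conjTranspose_mul, diagonal_conjTranspose,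
    ← star_eq_conjTranspose (evU hA), ← star_eq_conjTranspose (star (evU hA)), star_star,
    Matrix.mul_assoc]
  congr 1
  ext i
  simp [Pi.star_def, Complex.conj_ofReal]

lemma fcm_herm (f : ℝ → ℝ) : (fcm hA f).IsHermitian := fcm_conjTranspose hA f

lemma mlog_eq_fcm : mlog A = fcm hA Real.log := by
  unfold mlog
  rw [hA.1.cfc_eq]
  rfl

lemma sqrt_mul_sqrt : fcm hA Real.sqrt * fcm hA Real.sqrt = A := by
  rw [fcm_mul, fcm_congr hA (g := id) fun i => Real.mul_self_sqrt (evs_pos hA i).le]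
  exact fcm_id hA

lemma trace_fcm (f : ℝ → ℝ) : trace (fcm hA f) = ∑ i, (f (evs hA i) : ℂ) := by
  unfold fcm
  rw [trace_mul_comm, ← Matrix.mul_assoc, evU_star_mul_self hA, one_mul, trace_diagonal]

lemma star_evU_mul_A :
    star (evU hA) * A = diagonal (fun i => (evs hA i : ℂ)) * star (evU hA) := by
  have h : star (evU hA) * A * evU hA = diagonal (RCLike.ofReal ∘ hA.1.eigenvalues) :=
    by
      have := hA.1.conjStarAlgAut_star_eigenvectorUnitary
      simp only [Unitary.conjStarAlgAut_apply, Unitary.coe_star, star_star] at this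
      exact this
  calc star (evU hA) * A = star (evU hA) * A * (evU hA * star (evU hA)) := by
        rw [evU_mul_star_self hA, Matrix.mul_one]
    _ = (star (evU hA) * A * evU hA) * star (evU hA) := by
        rw [Matrix.mul_assoc (star (evU hA) * A)]
    _ = diagonal (fun i => (evs hA i : ℂ)) * star (evU hA) := by rw [h, diag_cast]

lemma A_mul_evU : A * evU hA = evU hA * diagonal (fun i => (evs hA i : ℂ)) := by
  have hs : A = evU hA * diagonal (RCLike.ofReal ∘ hA.1.eigenvalues) * star (evU hA) :=
    hA.1.spectral_theorem
  nth_rewrite 1 [hs]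
  rw [Matrix.mul_assoc, evU_star_mul_self hA, Matrix.mul_one, ← diag_cast]

end FCM

section RES

open ComplexConjugate

variable {A B : Matrix k k ℂ} (hA : A.PosDef) (hB : B.PosDef)

/-- coordinates of `X` in the (γ-basis, ρ-basis) frame -/
noncomputable def hatM (hA : A.PosDef) (hB : B.PosDef) (X : Matrix k k ℂ) : Matrix k k ℂ :=
  star (evU hA) * X * evU hB

lemma unhat (X : Matrix k k ℂ) : evU hA * hatM hA hB X * star (evU hB) = X := by
  unfold hatM
  rw [Matrix.mul_assoc, Matrix.mul_assoc, evU_mul_star_self hB, Matrix.mul_one,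
    ← Matrix.mul_assoc, evU_mul_star_self hA, Matrix.one_mul]

lemma hat_unhat (M : Matrix k k ℂ) : hatM hA hB (evU hA * M * star (evU hB)) = M := by
  unfold hatM
  simp only [Matrix.mul_assoc]
  rw [evU_star_mul_self hB, Matrix.mul_one, ← Matrix.mul_assoc, evU_star_mul_self hA,
    Matrix.one_mul]

/-- resolvent `(Δ + s)⁻¹` of the relative modular operator `Δ X = A X B⁻¹`. -/
noncomputable def res (hA : A.PosDef) (hB : B.PosDef) (s : ℝ) (X : Matrix k k ℂ) :
    Matrix k k ℂ :=
  evU hA * (Matrix.of fun p q => (((evs hA p / evs hB q + s)⁻¹ : ℝ) : ℂ) * hatM hA hB X p q)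
    * star (evU hB)

/-- `Δ + s` where `Δ X = A X B⁻¹`. -/
noncomputable def deltaS (hA : A.PosDef) (hB : B.PosDef) (s : ℝ) (X : Matrix k k ℂ) :
    Matrix k k ℂ :=
  A * X * fcm hB (fun t => t⁻¹) + (s : ℂ) • X

lemma deltaS_eq (s : ℝ) (X : Matrix k k ℂ) :
    deltaS hA hB s X = evU hA *
      (Matrix.of fun p q => (((evs hA p / evs hB q + s) : ℝ) : ℂ) * hatM hA hB X p q)
      * star (evU hB) := by
  set Xh := hatM hA hB X with hXh
  have hX : X = evU hA * Xh * star (evU hB) := (unhat hA hB X).symm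
  unfold deltaS
  have e2 : star (evU hB) * fcm hB (fun t => t⁻¹)
      = diagonal (fun i => (((evs hB i)⁻¹ : ℝ) : ℂ)) * star (evU hB) := by
    unfold fcm
    rw [← Matrix.mul_assoc, ← Matrix.mul_assoc, evU_star_mul_self hB, Matrix.one_mul]
  have t1 : A * X * fcm hB (fun t => t⁻¹)
      = evU hA * (diagonal (fun i => (evs hA i : ℂ)) * Xh *
          diagonal (fun i => (((evs hB i)⁻¹ : ℝ) : ℂ))) * star (evU hB) := by
    nth_rewrite 1 [hX]
    calc A * (evU hA * Xh * star (evU hB)) * fcm hB (fun t => t⁻¹)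
        = (A * evU hA) * Xh * (star (evU hB) * fcm hB (fun t => t⁻¹)) := by
          simp only [Matrix.mul_assoc]
      _ = _ := by rw [A_mul_evU hA, e2]; simp only [Matrix.mul_assoc]
  have t2 : (s : ℂ) • X = evU hA * ((s : ℂ) • Xh) * star (evU hB) := by
    rw [Matrix.mul_smul, Matrix.smul_mul, ← hX]
  rw [t1, t2, ← Matrix.add_mul, ← Matrix.mul_add]
  congr 2
  ext p q
  simp only [Matrix.add_apply, Matrix.smul_apply, Matrix.of_apply, smul_eq_mul]
  rw [Matrix.mul_diagonal, Matrix.diagonal_mul]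
  have hBq : (evs hB q : ℝ) ≠ 0 := (evs_pos hB q).ne'
  push_cast
  field_simp

lemma res_deltaS (s : ℝ) (hs : 0 ≤ s) (X : Matrix k k ℂ) :
    res hA hB s (deltaS hA hB s X) = X := by
  rw [deltaS_eq]
  unfold res
  rw [hat_unhat]
  nth_rewrite 2 [← unhat hA hB X]
  congr 1
  congr 1
  ext p q
  simp only [Matrix.of_apply]
  rw [← mul_assoc, ← Complex.ofReal_mul, inv_mul_cancel₀
    (by have h1 := evs_pos hA p; have h2 := evs_pos hB q; positivity),
    Complex.ofReal_one, one_mul]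

lemma deltaS_res (s : ℝ) (hs : 0 ≤ s) (X : Matrix k k ℂ) :
    deltaS hA hB s (res hA hB s X) = X := by
  rw [deltaS_eq]
  unfold res
  rw [hat_unhat]
  nth_rewrite 2 [← unhat hA hB X]
  congr 1
  congr 1
  ext p q
  simp only [Matrix.of_apply]
  rw [← mul_assoc, ← Complex.ofReal_mul, mul_inv_cancel₀
    (by have h1 := evs_pos hA p; have h2 := evs_pos hB q; positivity),
    Complex.ofReal_one, one_mul]


lemma trace_conj_swap (X Y : Matrix k k ℂ) : trace (Xᴴ * Y) = star (trace (Yᴴ * X)) := by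
  rw [← trace_conjTranspose, conjTranspose_mul, conjTranspose_conjTranspose]

lemma hatM_conjTranspose (X : Matrix k k ℂ) (hX : Xᴴ = X) :
    (hatM hA hB X)ᴴ = star (evU hB) * X * evU hA := by
  unfold hatM
  rw [conjTranspose_mul, conjTranspose_mul, hX, ← star_eq_conjTranspose (evU hB),
    ← star_eq_conjTranspose (star (evU hA)), star_star, Matrix.mul_assoc]

lemma conj_self_mul (z : ℂ) : (starRingEnd ℂ) z * z = ((‖z‖^2 : ℝ) : ℂ) := by
  rw [mul_comm, Complex.mul_conj, Complex.normSq_eq_norm_sq]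

lemma trace_conjTranspose_mul (P Q : Matrix k k ℂ) :
    trace (Pᴴ * Q) = ∑ p, ∑ q, (starRingEnd ℂ) (P p q) * Q p q := by
  simp only [Matrix.trace, Matrix.diag, Matrix.mul_apply, Matrix.conjTranspose_apply]
  rw [Finset.sum_comm]
  simp [Complex.star_def]

lemma res_inner (s : ℝ) (Y : Matrix k k ℂ) :
    trace (Yᴴ * res hA hB s Y) =
      ((∑ p, ∑ q, (evs hA p / evs hB q + s)⁻¹ * ‖hatM hA hB Y p q‖^2 : ℝ) : ℂ) := by
  unfold res
  have h1 : Yᴴ * (evU hA *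
        (Matrix.of fun p q => (((evs hA p / evs hB q + s)⁻¹ : ℝ) : ℂ) * hatM hA hB Y p q)
        * star (evU hB))
      = Yᴴ * evU hA *
        (Matrix.of fun p q => (((evs hA p / evs hB q + s)⁻¹ : ℝ) : ℂ) * hatM hA hB Y p q)
        * star (evU hB) := by
    simp only [Matrix.mul_assoc]
  rw [h1, trace_mul_comm, ← Matrix.mul_assoc, ← Matrix.mul_assoc]
  have h2 : star (evU hB) * Yᴴ * evU hA = (hatM hA hB Y)ᴴ := by
    unfold hatM
    rw [conjTranspose_mul, conjTranspose_mul, ← star_eq_conjTranspose (evU hB),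
      ← star_eq_conjTranspose (star (evU hA)), star_star, Matrix.mul_assoc]
  rw [h2, trace_conjTranspose_mul]
  push_cast
  congr 1
  ext p
  congr 1
  ext q
  simp only [Matrix.of_apply]
  rw [← mul_assoc, mul_comm ((starRingEnd ℂ) _), mul_assoc, conj_self_mul]
  norm_cast

lemma res_inner_nonneg (s : ℝ) (hs : 0 ≤ s) (Y : Matrix k k ℂ) :
    0 ≤ ∑ p, ∑ q, (evs hA p / evs hB q + s)⁻¹ * ‖hatM hA hB Y p q‖^2 := by
  apply Finset.sum_nonneg
  intro p _
  apply Finset.sum_nonneg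
  intro q _
  have h1 := evs_pos hA p
  have h2 := evs_pos hB q
  positivity

lemma deltaS_selfadj (s : ℝ) (X Y : Matrix k k ℂ) :
    trace ((deltaS hA hB s X)ᴴ * Y) = trace (Xᴴ * deltaS hA hB s Y) := by
  unfold deltaS
  rw [conjTranspose_add, conjTranspose_smul, conjTranspose_mul, conjTranspose_mul,
    fcm_conjTranspose, hA.1.eq, Matrix.add_mul, Matrix.mul_add, trace_add, trace_add,
    Matrix.smul_mul, Matrix.mul_smul, trace_smul, trace_smul]
  congr 1
  · simp only [Matrix.mul_assoc]
    rw [trace_mul_comm]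
    simp only [Matrix.mul_assoc]
  · rw [Complex.star_def, Complex.conj_ofReal]

noncomputable def coef (hA : A.PosDef) (hB : B.PosDef) (p q : k) : ℝ :=
  ‖hatM hA hB (fcm hB Real.sqrt) p q‖^2

lemma coef_nonneg (p q : k) : 0 ≤ coef hA hB p q := by unfold coef; positivity

lemma sum_coef_col (q : k) : ∑ p, coef hA hB p q = evs hB q := by
  set M := hatM hA hB (fcm hB Real.sqrt) with hM
  have hMt : Mᴴ = star (evU hB) * fcm hB Real.sqrt * evU hA :=
    hatM_conjTranspose hA hB _ (fcm_conjTranspose hB _)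
  have way2 : Mᴴ * M = diagonal (fun i => (evs hB i : ℂ)) := by
    rw [hMt, hM]
    unfold hatM
    calc (star (evU hB) * fcm hB Real.sqrt * evU hA) * (star (evU hA) * fcm hB Real.sqrt * evU hB)
        = star (evU hB) * (fcm hB Real.sqrt * (evU hA * star (evU hA)) * fcm hB Real.sqrt) *
          evU hB := by simp only [Matrix.mul_assoc]
      _ = star (evU hB) * B * evU hB := by
          rw [evU_mul_star_self hA, Matrix.mul_one, sqrt_mul_sqrt hB]
      _ = diagonal (fun i => (evs hB i : ℂ)) * (star (evU hB) * evU hB) := by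
          rw [star_evU_mul_A hB, Matrix.mul_assoc]
      _ = diagonal (fun i => (evs hB i : ℂ)) := by
          rw [evU_star_mul_self hB, Matrix.mul_one]
  have way1 : (Mᴴ * M) q q = ((∑ p, coef hA hB p q : ℝ) : ℂ) := by
    simp only [Matrix.mul_apply, Matrix.conjTranspose_apply, Complex.star_def]
    push_cast
    congr 1
    ext p
    rw [conj_self_mul]
    rfl
  have : ((∑ p, coef hA hB p q : ℝ) : ℂ) = ((evs hB q : ℝ) : ℂ) := by
    rw [← way1, way2, Matrix.diagonal_apply_eq]
  exact_mod_cast this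

lemma sum_coef_row (p : k) :
    ((∑ q, coef hA hB p q : ℝ) : ℂ) = (star (evU hA) * B * evU hA) p p := by
  set M := hatM hA hB (fcm hB Real.sqrt) with hM
  have hMt : Mᴴ = star (evU hB) * fcm hB Real.sqrt * evU hA :=
    hatM_conjTranspose hA hB _ (fcm_conjTranspose hB _)
  have way2 : M * Mᴴ = star (evU hA) * B * evU hA := by
    rw [hMt, hM]
    unfold hatM
    calc (star (evU hA) * fcm hB Real.sqrt * evU hB) * (star (evU hB) * fcm hB Real.sqrt * evU hA)
        = star (evU hA) * (fcm hB Real.sqrt * (evU hB * star (evU hB)) * fcm hB Real.sqrt) *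
          evU hA := by simp only [Matrix.mul_assoc]
      _ = star (evU hA) * B * evU hA := by
          rw [evU_mul_star_self hB, Matrix.mul_one, sqrt_mul_sqrt hB]
  rw [← way2]
  simp only [Matrix.mul_apply, Matrix.conjTranspose_apply, Complex.star_def]
  push_cast
  congr 1
  ext q
  rw [mul_comm, conj_self_mul]
  rfl

lemma trace_B_fcmA (f : ℝ → ℝ) :
    trace (B * fcm hA f) = ∑ p, ((∑ q, coef hA hB p q : ℝ) : ℂ) * (f (evs hA p) : ℂ) := by
  unfold fcm
  have h1 : B * (evU hA * diagonal (fun i => (f (evs hA i) : ℂ)) * star (evU hA))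
      = B * evU hA * diagonal (fun i => (f (evs hA i) : ℂ)) * star (evU hA) := by
    simp only [Matrix.mul_assoc]
  rw [h1, trace_mul_comm, ← Matrix.mul_assoc, ← Matrix.mul_assoc]
  have h2 : trace (star (evU hA) * B * evU hA * diagonal (fun i => (f (evs hA i) : ℂ)))
      = ∑ p, (star (evU hA) * B * evU hA) p p * (f (evs hA p) : ℂ) := by
    simp [Matrix.trace, Matrix.diag, Matrix.mul_diagonal]
  rw [h2]
  congr 1
  ext p
  rw [sum_coef_row]

lemma relEnt_eq : relEnt B A =
    ∑ p, ∑ q, coef hA hB p q * (Real.log (evs hB q) - Real.log (evs hA p)) := by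
  unfold relEnt
  rw [Matrix.mul_sub, trace_sub]
  have T1 : trace (B * mlog B) = ((∑ q, evs hB q * Real.log (evs hB q) : ℝ) : ℂ) := by
    rw [mlog_eq_fcm hB]
    nth_rewrite 1 [← fcm_id hB]
    rw [fcm_mul, trace_fcm]
    push_cast
    rfl
  have T2 : trace (B * mlog A)
      = ((∑ p, (∑ q, coef hA hB p q) * Real.log (evs hA p) : ℝ) : ℂ) := by
    rw [mlog_eq_fcm hA, trace_B_fcmA]
    push_cast
    rfl
  rw [T1, T2]
  rw [← Complex.ofReal_sub, Complex.ofReal_re]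
  have e1 : ∑ q, evs hB q * Real.log (evs hB q)
      = ∑ p, ∑ q, coef hA hB p q * Real.log (evs hB q) := by
    rw [Finset.sum_comm]
    congr 1
    ext q
    rw [← Finset.sum_mul, sum_coef_col]
  rw [e1]
  rw [← Finset.sum_sub_distrib]
  congr 1
  ext p
  rw [Finset.sum_mul, ← Finset.sum_sub_distrib]
  congr 1
  ext q
  ring

lemma sum_sum_coef : ∑ p, ∑ q, coef hA hB p q = (trace B).re := by
  rw [Finset.sum_comm]
  have : ∑ q, ∑ p, coef hA hB p q = ∑ q, evs hB q := by
    congr 1; ext q; exact sum_coef_col hA hB q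
  rw [this]
  nth_rewrite 2 [← fcm_id hB]
  rw [trace_fcm]
  push_cast
  simp
lemma hatM_sub (X Y : Matrix k k ℂ) :
    hatM hA hB (X - Y) = hatM hA hB X - hatM hA hB Y := by
  unfold hatM
  rw [Matrix.mul_sub, Matrix.sub_mul]

lemma res_sub (s : ℝ) (X Y : Matrix k k ℂ) :
    res hA hB s (X - Y) = res hA hB s X - res hA hB s Y := by
  unfold res
  rw [hatM_sub]
  have h : (Matrix.of fun p q => (((evs hA p / evs hB q + s)⁻¹ : ℝ) : ℂ)
        * (hatM hA hB X - hatM hA hB Y) p q)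
      = (Matrix.of fun p q => (((evs hA p / evs hB q + s)⁻¹ : ℝ) : ℂ) * hatM hA hB X p q)
        - (Matrix.of fun p q => (((evs hA p / evs hB q + s)⁻¹ : ℝ) : ℂ) * hatM hA hB Y p q) := by
    ext p q
    simp only [Matrix.of_apply, Matrix.sub_apply]
    ring
  rw [h, Matrix.mul_sub, Matrix.sub_mul]

end RES
section KRON

open Kronecker

variable {m n : Type*} [Fintype m] [DecidableEq m] [Fintype n] [DecidableEq n]

lemma oneKron_mul (Y Z : Matrix n n ℂ) :
    ((1 : Matrix m m ℂ) ⊗ₖ Y) * ((1 : Matrix m m ℂ) ⊗ₖ Z) = (1 : Matrix m m ℂ) ⊗ₖ (Y * Z) := by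
  rw [← Matrix.mul_kronecker_mul, Matrix.one_mul]

lemma oneKron_conjT (Z : Matrix n n ℂ) :
    ((1 : Matrix m m ℂ) ⊗ₖ Z)ᴴ = (1 : Matrix m m ℂ) ⊗ₖ Zᴴ := by
  ext p q
  simp only [Matrix.conjTranspose_apply, Matrix.kroneckerMap_apply, Matrix.one_apply]
  by_cases h : p.1 = q.1
  · rw [if_pos h, if_pos h.symm]
    simp
  · rw [if_neg h, if_neg (fun hh : q.1 = p.1 => h hh.symm)]
    simp

lemma oneKron_one : ((1 : Matrix m m ℂ) ⊗ₖ (1 : Matrix n n ℂ)) = 1 :=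
  Matrix.one_kronecker_one

lemma trace_mul_oneKron (ρ : Matrix (m × n) (m × n) ℂ) (Z : Matrix n n ℂ) :
    trace (ρ * ((1 : Matrix m m ℂ) ⊗ₖ Z)) = trace (ptraceL ρ * Z) := by
  have lhs : trace (ρ * ((1 : Matrix m m ℂ) ⊗ₖ Z)) = ∑ i, ∑ j, ∑ j', ρ (i,j) (i,j') * Z j' j := by
    simp only [Matrix.trace, Matrix.diag, Matrix.mul_apply, Matrix.kroneckerMap_apply,
      Matrix.one_apply]
    rw [Fintype.sum_prod_type]
    congr 1
    ext i
    congr 1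
    ext j
    rw [Fintype.sum_prod_type]
    rw [Finset.sum_comm]
    congr 1
    ext j'
    rw [Finset.sum_eq_single i (fun b _ hb => by simp [hb]) (by simp)]
    simp
  have rhs : trace (ptraceL ρ * Z) = ∑ j, ∑ j', ∑ i, ρ (i,j) (i,j') * Z j' j := by
    simp only [Matrix.trace, Matrix.diag, Matrix.mul_apply, ptraceL, Matrix.of_apply]
    congr 1
    ext j
    congr 1
    ext j'
    rw [Finset.sum_mul]
  rw [lhs, rhs]
  rw [Finset.sum_comm]
  congr 1
  ext j
  rw [Finset.sum_comm]

lemma trace_ptraceL (ρ : Matrix (m × n) (m × n) ℂ) : trace (ptraceL ρ) = trace ρ := by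
  simp only [Matrix.trace, Matrix.diag, ptraceL, Matrix.of_apply]
  rw [Fintype.sum_prod_type, Finset.sum_comm]

lemma sum_rot {α β γ M : Type*} [AddCommMonoid M] [Fintype α] [Fintype β] [Fintype γ]
    (F : α → β → γ → M) :
    ∑ a, ∑ b, ∑ c, F a b c = ∑ c, ∑ a, ∑ b, F a b c := by
  have h1 : ∀ a, ∑ b, ∑ c, F a b c = ∑ c, ∑ b, F a b c := fun a => Finset.sum_comm
  simp_rw [h1]
  exact Finset.sum_comm

lemma ptraceL_posdef [Nonempty m] (ρ : Matrix (m × n) (m × n) ℂ) (hρ : ρ.PosDef) :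
    (ptraceL ρ).PosDef := by
  refine posDef_iff_dotProduct_mulVec.mpr ⟨?_, ?_⟩
  · ext j j'
    simp only [Matrix.conjTranspose_apply, ptraceL, Matrix.of_apply, star_sum]
    congr 1
    ext i
    have := congrFun (congrFun hρ.1 (i, j)) (i, j')
    simpa [Matrix.conjTranspose_apply] using this
  · intro x hx
    set v : m → (m × n → ℂ) := fun i => fun p : m × n => if p.1 = i then x p.2 else 0 with hv
    have hvne : ∀ i : m, v i ≠ 0 := by
      intro i h
      apply hx
      ext j
      have := congrFun h (i, j)
      simpa [hv] using this
    have hL : dotProduct (star x) (ptraceL ρ *ᵥ x)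
        = ∑ i, ∑ j, ∑ j', star (x j) * (ρ (i,j) (i,j') * x j') := by
      simp only [dotProduct, Matrix.mulVec, dotProduct, ptraceL, Matrix.of_apply, Pi.star_apply,
        Finset.mul_sum, Finset.sum_mul]
      exact sum_rot (fun j j' i => star (x j) * (ρ (i,j) (i,j') * x j'))
    have hR : ∀ i, dotProduct (star (v i)) (ρ *ᵥ v i)
        = ∑ j, ∑ j', star (x j) * (ρ (i,j) (i,j') * x j') := by
      intro i
      simp only [dotProduct, Matrix.mulVec, dotProduct, Pi.star_apply, hv, apply_ite (star : ℂ → ℂ), star_zero]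
      rw [Fintype.sum_prod_type]
      rw [Finset.sum_eq_single i (fun b _ hb => by simp [hb]) (by simp)]
      congr 1
      ext j
      have hinner : (∑ q : m × n, ρ (i,j) q * (if q.1 = i then x q.2 else 0))
          = ∑ j', ρ (i,j) (i,j') * x j' := by
        rw [Fintype.sum_prod_type]
        rw [Finset.sum_eq_single i (fun b _ hb => by simp [hb]) (by simp)]
        simp
      rw [if_pos rfl, hinner, Finset.mul_sum]
    rw [hL]
    have : ∀ i : m, (0 : ℂ) < ∑ j, ∑ j', star (x j) * (ρ (i,j) (i,j') * x j') := by
      intro i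
      rw [← hR i]
      exact hρ.dotProduct_mulVec_pos (hvne i)
    apply Finset.sum_pos (fun i _ => this i) Finset.univ_nonempty

end KRON
section MAIN

open Kronecker

variable {m n : Type*} [Fintype m] [DecidableEq m] [Fintype n] [DecidableEq n]

lemma per_s [Nonempty m] (ρ γ : Matrix (m × n) (m × n) ℂ) (hρ : ρ.PosDef) (hγ : γ.PosDef)
    (hρ2 : (ptraceL ρ).PosDef) (hγ2 : (ptraceL γ).PosDef) (s : ℝ) (hs : 0 ≤ s) :
    ∑ p, ∑ q, (evs hγ2 p / evs hρ2 q + s)⁻¹ * coef hγ2 hρ2 p q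
      ≤ ∑ p, ∑ q, (evs hγ p / evs hρ q + s)⁻¹ * coef hγ hρ p q := by
  set u := fcm hρ Real.sqrt with hu
  set u₂ := fcm hρ2 Real.sqrt with hu2
  set nh₂ := fcm hρ2 (fun t => (Real.sqrt t)⁻¹) with hnh
  set z₂ := res hγ2 hρ2 s u₂ with hz2
  set V : Matrix n n ℂ → Matrix (m × n) (m × n) ℂ :=
    fun Y => ((1 : Matrix m m ℂ) ⊗ₖ (Y * nh₂)) * u with hV
  set z := V z₂ with hz
  set Φ : ℝ := ∑ p, ∑ q, (evs hγ p / evs hρ q + s)⁻¹ * coef hγ hρ p q with hPhi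
  set Φ₂ : ℝ := ∑ p, ∑ q, (evs hγ2 p / evs hρ2 q + s)⁻¹ * coef hγ2 hρ2 p q with hPhi2
  -- scalar fcm identities
  have hnn : nh₂ * ptraceL ρ * nh₂ = 1 := by
    rw [hnh]
    nth_rewrite 2 [← fcm_id hρ2]
    rw [fcm_mul, fcm_mul]
    rw [fcm_congr hρ2 (g := fun _ => 1) (fun i => by
      have h := evs_pos hρ2 i
      simp only [id_eq]
      rw [show ((Real.sqrt (evs hρ2 i))⁻¹ * evs hρ2 i) * (Real.sqrt (evs hρ2 i))⁻¹
          = evs hρ2 i / (Real.sqrt (evs hρ2 i) * Real.sqrt (evs hρ2 i)) by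
          rw [div_eq_mul_inv, mul_inv]; ring,
        Real.mul_self_sqrt h.le, div_self h.ne'])]
    exact fcm_one hρ2
  have hu2nh : u₂ * nh₂ = 1 := by
    rw [hu2, hnh, fcm_mul]
    rw [fcm_congr hρ2 (g := fun _ => 1) (fun i => by
      have h := evs_pos hρ2 i
      have h3 : Real.sqrt (evs hρ2 i) ≠ 0 := by positivity
      exact mul_inv_cancel₀ h3)]
    exact fcm_one hρ2
  have hnhnh : nh₂ * nh₂ = fcm hρ2 (fun t => t⁻¹) := by
    rw [hnh, fcm_mul]
    apply fcm_congr hρ2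
    intro i
    have h := evs_pos hρ2 i
    rw [← mul_inv, Real.mul_self_sqrt h.le]
  have hupu : u * fcm hρ (fun t => t⁻¹) * u = 1 := by
    rw [hu, fcm_mul, fcm_mul]
    rw [fcm_congr hρ (g := fun _ => 1) (fun i => by
      have h := evs_pos hρ i
      rw [show (Real.sqrt (evs hρ i) * (evs hρ i)⁻¹) * Real.sqrt (evs hρ i)
          = (Real.sqrt (evs hρ i) * Real.sqrt (evs hρ i)) * (evs hρ i)⁻¹ by ring,
        Real.mul_self_sqrt h.le, mul_inv_cancel₀ h.ne'])]
    exact fcm_one hρ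
  have hVt : ∀ Y : Matrix n n ℂ,
      (V Y)ᴴ = u * ((1 : Matrix m m ℂ) ⊗ₖ (nh₂ * Yᴴ)) := by
    intro Y
    rw [hV]
    simp only []
    rw [conjTranspose_mul, oneKron_conjT, conjTranspose_mul, hu, fcm_conjTranspose, ← hu,
      hnh, fcm_conjTranspose, ← hnh]
  -- isometry
  have f1 : ∀ Y₁ Y₂ : Matrix n n ℂ, trace ((V Y₁)ᴴ * V Y₂) = trace (Y₁ᴴ * Y₂) := by
    intro Y₁ Y₂
    rw [hVt]
    have e1 : (u * ((1 : Matrix m m ℂ) ⊗ₖ (nh₂ * Y₁ᴴ))) *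
          (((1 : Matrix m m ℂ) ⊗ₖ (Y₂ * nh₂)) * u)
        = u * (((1 : Matrix m m ℂ) ⊗ₖ (nh₂ * Y₁ᴴ)) * ((1 : Matrix m m ℂ) ⊗ₖ (Y₂ * nh₂))) * u := by
      simp only [Matrix.mul_assoc]
    rw [hV]
    simp only []
    rw [e1, oneKron_mul, trace_mul_comm, ← Matrix.mul_assoc, hu, sqrt_mul_sqrt hρ,
      trace_mul_oneKron]
    have e2 : ptraceL ρ * ((nh₂ * Y₁ᴴ) * (Y₂ * nh₂))
        = (ptraceL ρ * nh₂ * Y₁ᴴ * Y₂) * nh₂ := by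
      simp only [Matrix.mul_assoc]
    rw [e2, trace_mul_comm]
    have e3 : nh₂ * (ptraceL ρ * nh₂ * Y₁ᴴ * Y₂) = (nh₂ * ptraceL ρ * nh₂) * (Y₁ᴴ * Y₂) := by
      simp only [Matrix.mul_assoc]
    rw [e3, hnn, Matrix.one_mul]
  -- V maps u₂ to u
  have f2 : V u₂ = u := by
    rw [hV]
    simp only []
    rw [hu2nh, oneKron_one, Matrix.one_mul]
  -- intertwining
  have f3 : ∀ Y₁ Y₂ : Matrix n n ℂ,
      trace ((V Y₁)ᴴ * deltaS hγ hρ s (V Y₂))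
        = trace (Y₁ᴴ * deltaS hγ2 hρ2 s Y₂) := by
    intro Y₁ Y₂
    unfold deltaS
    rw [Matrix.mul_add, Matrix.mul_add, trace_add, trace_add, Matrix.mul_smul,
      Matrix.mul_smul, trace_smul, trace_smul, f1]
    congr 1
    rw [hVt]
    nth_rewrite 1 [hV]
    simp only []
    have e2 : (u * ((1 : Matrix m m ℂ) ⊗ₖ (nh₂ * Y₁ᴴ))) *
          (γ * (((1 : Matrix m m ℂ) ⊗ₖ (Y₂ * nh₂)) * u) * fcm hρ (fun t => t⁻¹))
        = ((((u * ((1 : Matrix m m ℂ) ⊗ₖ (nh₂ * Y₁ᴴ))) * γ) *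
            ((1 : Matrix m m ℂ) ⊗ₖ (Y₂ * nh₂))) * u) * fcm hρ (fun t => t⁻¹) := by
      simp only [Matrix.mul_assoc]
    rw [e2, trace_mul_comm, ← Matrix.mul_assoc, trace_mul_comm]
    have e4 : u * (fcm hρ (fun t => t⁻¹) *
          (((u * ((1 : Matrix m m ℂ) ⊗ₖ (nh₂ * Y₁ᴴ))) * γ) *
            ((1 : Matrix m m ℂ) ⊗ₖ (Y₂ * nh₂))))
        = (((u * fcm hρ (fun t => t⁻¹) * u) * ((1 : Matrix m m ℂ) ⊗ₖ (nh₂ * Y₁ᴴ))) * γ) *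
            ((1 : Matrix m m ℂ) ⊗ₖ (Y₂ * nh₂)) := by
      simp only [Matrix.mul_assoc]
    rw [e4, hupu, Matrix.one_mul, trace_mul_comm, ← Matrix.mul_assoc, oneKron_mul,
      trace_mul_comm, trace_mul_oneKron]
    have e6 : ptraceL γ * ((Y₂ * nh₂) * (nh₂ * Y₁ᴴ))
        = ((ptraceL γ * Y₂) * (nh₂ * nh₂)) * Y₁ᴴ := by
      simp only [Matrix.mul_assoc]
    rw [e6, hnhnh, trace_mul_comm]
  -- coefficient identification
  have Ecoef : ∀ p q, coef hγ hρ p q = ‖hatM hγ hρ u p q‖^2 := by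
    intro p q
    rw [hu]
    rfl
  have Ecoef2 : ∀ p q, coef hγ2 hρ2 p q = ‖hatM hγ2 hρ2 u₂ p q‖^2 := by
    intro p q
    rw [hu2]
    rfl
  -- the four trace computations
  have E1 : trace (uᴴ * res hγ hρ s u) = ((Φ : ℝ) : ℂ) := by
    rw [res_inner, hPhi]
    simp_rw [Ecoef]
  have E2small : trace (u₂ᴴ * z₂) = ((Φ₂ : ℝ) : ℂ) := by
    rw [hz2, res_inner, hPhi2]
    simp_rw [Ecoef2]
  have E2 : trace (uᴴ * z) = ((Φ₂ : ℝ) : ℂ) := by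
    rw [hz, ← f2, f1]
    exact E2small
  have E3 : trace ((deltaS hγ hρ s z)ᴴ * res hγ hρ s u) = ((Φ₂ : ℝ) : ℂ) := by
    rw [deltaS_selfadj, deltaS_res hγ hρ s hs, trace_conj_swap, E2, Complex.star_def,
      Complex.conj_ofReal]
  have E4 : trace ((deltaS hγ hρ s z)ᴴ * z) = ((Φ₂ : ℝ) : ℂ) := by
    rw [trace_conj_swap, hz, f3, hz2, deltaS_res hγ2 hρ2 s hs, trace_conj_swap, star_star,
      res_inner, hPhi2]
    simp_rw [Ecoef2]
  -- positivity and expansion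
  have Eexp : trace ((u - deltaS hγ hρ s z)ᴴ * res hγ hρ s (u - deltaS hγ hρ s z))
      = ((Φ - Φ₂ : ℝ) : ℂ) := by
    rw [conjTranspose_sub, res_sub, res_deltaS hγ hρ s hs, Matrix.sub_mul, Matrix.mul_sub,
      Matrix.mul_sub, trace_sub, trace_sub, trace_sub, E1, E2, E3, E4]
    push_cast
    ring
  have Epos := res_inner_nonneg hγ hρ s hs (u - deltaS hγ hρ s z)
  have Eval := res_inner hγ hρ s (u - deltaS hγ hρ s z)
  rw [Eexp] at Eval
  have : Φ - Φ₂ = ∑ p, ∑ q, (evs hγ p / evs hρ q + s)⁻¹ *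
      ‖hatM hγ hρ (u - deltaS hγ hρ s z) p q‖ ^ 2 := by
    exact_mod_cast Eval
  linarith

end MAIN

end RelEntAux

open Kronecker in
/-- Monotonicity of relative entropy under partial trace. -/
theorem relEnt_monotone_partial_trace {m n : Type*} [Fintype m] [DecidableEq m]
    [Fintype n] [DecidableEq n]
    (ρ γ : Matrix (m × n) (m × n) ℂ) (hρ : ρ.PosDef) (hγ : γ.PosDef)
    (hρ1 : Matrix.trace ρ = 1) (hγ1 : Matrix.trace γ = 1) :
    relEnt (ptraceL ρ) (ptraceL γ) ≤ relEnt ρ γ := by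
  have hKne : Nonempty (m × n) := by
    by_contra h
    rw [not_nonempty_iff] at h
    have h0 : Matrix.trace ρ = 0 := by simp [Matrix.trace]
    rw [h0] at hρ1
    exact zero_ne_one hρ1
  have hm : Nonempty m := ⟨hKne.some.1⟩
  have hρ2 : (ptraceL ρ).PosDef := RelEntAux.ptraceL_posdef ρ hρ
  have hγ2 : (ptraceL γ).PosDef := RelEntAux.ptraceL_posdef γ hγ
  rw [RelEntAux.relEnt_eq hγ hρ, RelEntAux.relEnt_eq hγ2 hρ2]
  have key := RelEntAux.key_scalar2
    (fun p q => RelEntAux.coef hγ hρ p q)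
    (fun p q => RelEntAux.evs hγ p / RelEntAux.evs hρ q)
    (fun p q => RelEntAux.coef hγ2 hρ2 p q)
    (fun p q => RelEntAux.evs hγ2 p / RelEntAux.evs hρ2 q)
    (fun p q => RelEntAux.coef_nonneg hγ hρ _ _)
    (fun p q => div_pos (RelEntAux.evs_pos hγ _) (RelEntAux.evs_pos hρ _))
    (fun p q => RelEntAux.coef_nonneg hγ2 hρ2 _ _)
    (fun p q => div_pos (RelEntAux.evs_pos hγ2 _) (RelEntAux.evs_pos hρ2 _))
    (by
      rw [RelEntAux.sum_sum_coef hγ hρ, RelEntAux.sum_sum_coef hγ2 hρ2,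
        RelEntAux.trace_ptraceL])
    (by
      intro s hs
      have h := RelEntAux.per_s ρ γ hρ hγ hρ2 hγ2 s hs
      simp_rw [div_eq_mul_inv]
      calc ∑ p, ∑ q, RelEntAux.coef hγ2 hρ2 p q *
            (RelEntAux.evs hγ2 p * (RelEntAux.evs hρ2 q)⁻¹ + s)⁻¹
          = ∑ p, ∑ q, (RelEntAux.evs hγ2 p / RelEntAux.evs hρ2 q + s)⁻¹ *
              RelEntAux.coef hγ2 hρ2 p q := by
            simp_rw [div_eq_mul_inv, mul_comm]
        _ ≤ ∑ p, ∑ q, (RelEntAux.evs hγ p / RelEntAux.evs hρ q + s)⁻¹ *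
              RelEntAux.coef hγ hρ p q := h
        _ = ∑ p, ∑ q, RelEntAux.coef hγ hρ p q *
              (RelEntAux.evs hγ p * (RelEntAux.evs hρ q)⁻¹ + s)⁻¹ := by
            simp_rw [div_eq_mul_inv, mul_comm])
  have e1 : ∀ (p q : m × n), Real.log (RelEntAux.evs hγ p / RelEntAux.evs hρ q)
      = Real.log (RelEntAux.evs hγ p) - Real.log (RelEntAux.evs hρ q) :=
    fun p q => Real.log_div (RelEntAux.evs_pos hγ p).ne' (RelEntAux.evs_pos hρ q).ne'
  have e2 : ∀ (p q : n), Real.log (RelEntAux.evs hγ2 p / RelEntAux.evs hρ2 q)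
      = Real.log (RelEntAux.evs hγ2 p) - Real.log (RelEntAux.evs hρ2 q) :=
    fun p q => Real.log_div (RelEntAux.evs_pos hγ2 p).ne' (RelEntAux.evs_pos hρ2 q).ne'
  simp_rw [e1, e2] at key
  have flip1 : ∑ p, ∑ q, RelEntAux.coef hγ hρ p q *
      (Real.log (RelEntAux.evs hρ q) - Real.log (RelEntAux.evs hγ p))
      = -∑ p, ∑ q, RelEntAux.coef hγ hρ p q *
        (Real.log (RelEntAux.evs hγ p) - Real.log (RelEntAux.evs hρ q)) := by
    rw [← Finset.sum_neg_distrib]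
    congr 1
    ext p
    rw [← Finset.sum_neg_distrib]
    congr 1
    ext q
    ring
  have flip2 : ∑ p, ∑ q, RelEntAux.coef hγ2 hρ2 p q *
      (Real.log (RelEntAux.evs hρ2 q) - Real.log (RelEntAux.evs hγ2 p))
      = -∑ p, ∑ q, RelEntAux.coef hγ2 hρ2 p q *
        (Real.log (RelEntAux.evs hγ2 p) - Real.log (RelEntAux.evs hρ2 q)) := by
    rw [← Finset.sum_neg_distrib]
    congr 1
    ext p
    rw [← Finset.sum_neg_distrib]
    congr 1
    ext q
    ring
  rw [flip1, flip2]
  linarith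
end
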